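/- arXiv:2402.02159 — 6 statements merged into one kernel-verified Lean document; each statement's English description precedes it below -/
import Mathlib

section
/- Let X and Y be independent exponential random variables with rates ω₁ > 0 and ω₂ > 0 respectively. Then for z > 0, P(XY ≤ z) = 1 - 2√(z ω₁ ω₂) · K₁(2√(z ω₁ ω₂)), where K₁ is the modified Bessel function of the second kind of order 1. -/
open Real Set MeasureTheory ProbabilityTheory

lemma expMeasure_eq_withDensity (r : ℝ) :
    expMeasure r = MeasureTheory.volume.withDensity (exponentialPDF r) := rfl

lemma expMeasure_Iic {r : ℝ} (hr : 0 < r) {t : ℝ} (ht : 0 ≤ t) :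
    expMeasure r (Iic t) = ENNReal.ofReal (1 - Real.exp (-(r * t))) := by
  rw [expMeasure_eq_withDensity, withDensity_apply _ measurableSet_Iic,
    lintegral_exponentialPDF_eq_antiDeriv hr, if_pos ht]

lemma expMeasure_Ioi {r : ℝ} (hr : 0 < r) {t : ℝ} (ht : 0 ≤ t) :
    expMeasure r (Ioi t) = ENNReal.ofReal (Real.exp (-(r * t))) := by
  haveI := isProbabilityMeasure_expMeasure hr
  have h1 : Real.exp (-(r * t)) ≤ 1 := Real.exp_le_one_iff.mpr (by nlinarith)
  have : Ioi t = (Iic t)ᶜ := by simp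
  rw [this, prob_compl_eq_one_sub measurableSet_Iic, expMeasure_Iic hr ht]
  rw [ENNReal.sub_eq_of_eq_add ENNReal.ofReal_ne_top]
  rw [← ENNReal.ofReal_add (Real.exp_pos _).le (by linarith), ← ENNReal.ofReal_one]
  ring_nf


/-- Modified Bessel function of the second kind of order `ν`. -/
noncomputable def besselK (ν x : ℝ) : ℝ :=
  (1 / 2) * ∫ t in Ioi (0:ℝ), t ^ (ν - 1) * Real.exp (-(x / 2) * (t + 1 / t))

/-- For independent `X ~ Exp(ω₁)`, `Y ~ Exp(ω₂)` and `z > 0`,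
`P(XY ≤ z) = 1 - 2√(zω₁ω₂) K₁(2√(zω₁ω₂))`. -/
theorem prob_mul_exp_le (Ω : Type*) [MeasureSpace Ω] [IsProbabilityMeasure (ℙ : Measure Ω)]
    (X Y : Ω → ℝ) (hX : Measurable X) (hY : Measurable Y)
    (ω₁ ω₂ : ℝ) (hω₁ : 0 < ω₁) (hω₂ : 0 < ω₂)
    (hXlaw : Measure.map X ℙ = expMeasure ω₁)
    (hYlaw : Measure.map Y ℙ = expMeasure ω₂)
    (hind : IndepFun X Y ℙ) (z : ℝ) (hz : 0 < z) :
    (ℙ {ω | X ω * Y ω ≤ z}).toReal =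
      1 - 2 * Real.sqrt (z * ω₁ * ω₂) * besselK 1 (2 * Real.sqrt (z * ω₁ * ω₂)) := by
  haveI := isProbabilityMeasure_expMeasure hω₁
  haveI := isProbabilityMeasure_expMeasure hω₂
  set c := Real.sqrt (z * ω₁ * ω₂) with hc
  have hcpos : 0 < c := Real.sqrt_pos.mpr (by positivity)
  have hc2 : c ^ 2 = z * ω₁ * ω₂ := Real.sq_sqrt (by positivity)
  clear_value c
  -- the integrand after slicing
  set g : ℝ → ℝ := fun x => ω₁ * Real.exp (-(ω₁ * x) - ω₂ * z / x) with hg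
  have hgnn : ∀ x, 0 ≤ g x := fun x => by positivity
  have hgint : IntegrableOn g (Ioi 0) := by
    have h0 : IntegrableOn (fun x => ω₁ * Real.exp (-ω₁ * x)) (Ioi 0) :=
      (exp_neg_integrableOn_Ioi 0 hω₁).const_mul ω₁
    refine h0.mono' ?_ ?_
    · exact ((measurable_const.mul ((measurable_const.mul measurable_id').neg.sub
        (measurable_const.div measurable_id')).exp)).aestronglyMeasurable
    · filter_upwards [self_mem_ae_restrict measurableSet_Ioi] with x hx
      rw [Real.norm_of_nonneg (hgnn x)]
      have hx' : (0:ℝ) < x := hx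
      have : -(ω₁ * x) - ω₂ * z / x ≤ -ω₁ * x := by
        have : 0 ≤ ω₂ * z / x := by positivity
        linarith
      exact mul_le_mul_of_nonneg_left (Real.exp_le_exp.mpr this) hω₁.le
  -- Step A : probability of complement
  have hmset : MeasurableSet {ω | X ω * Y ω ≤ z} :=
    measurableSet_le (hX.mul hY) measurable_const
  have hA : (ℙ {ω | X ω * Y ω ≤ z}).toReal = 1 - (ℙ {ω | z < X ω * Y ω}).toReal := by
    have : {ω | z < X ω * Y ω} = {ω | X ω * Y ω ≤ z}ᶜ := by
      ext ω; simp [not_le]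
    rw [this, prob_compl_eq_one_sub hmset, ENNReal.toReal_sub_of_le (prob_le_one) ENNReal.one_ne_top]
    simp
  -- Step B : law of the pair
  have hpair : Measure.map (fun ω => (X ω, Y ω)) ℙ = (expMeasure ω₁).prod (expMeasure ω₂) := by
    rw [← hXlaw, ← hYlaw]
    exact (indepFun_iff_map_prod_eq_prod_map_map hX.aemeasurable hY.aemeasurable).mp hind
  have hSmeas : MeasurableSet {p : ℝ × ℝ | z < p.1 * p.2} :=
    measurableSet_lt measurable_const (measurable_fst.mul measurable_snd)
  have hB : ℙ {ω | z < X ω * Y ω} = ((expMeasure ω₁).prod (expMeasure ω₂)) {p : ℝ × ℝ | z < p.1 * p.2} := by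
    rw [← hpair, Measure.map_apply (hX.prodMk hY) hSmeas]
    rfl
  -- Step C : Fubini slicing
  have hC : ((expMeasure ω₁).prod (expMeasure ω₂)) {p : ℝ × ℝ | z < p.1 * p.2}
      = ∫⁻ x, exponentialPDF ω₁ x * (expMeasure ω₂) {y | z < x * y} := by
    have hm1 : Measurable (exponentialPDF ω₁) := (measurable_exponentialPDFReal ω₁).ennreal_ofReal
    rw [Measure.prod_apply hSmeas, expMeasure_eq_withDensity ω₁,
      lintegral_withDensity_eq_lintegral_mul _ hm1
        (measurable_measure_prodMk_left hSmeas)]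
    rfl
  -- Step D : evaluate
  have hD : (∫⁻ x, exponentialPDF ω₁ x * (expMeasure ω₂) {y | z < x * y})
      = ENNReal.ofReal (∫ x in Ioi (0:ℝ), g x) := by
    have h0 : ∀ᵐ (x : ℝ), x ≠ (0:ℝ) := by
      rw [ae_iff]
      have : {x : ℝ | ¬ x ≠ 0} = {0} := by ext x; simp
      simp [this]
    have h1 : (fun x => exponentialPDF ω₁ x * (expMeasure ω₂) {y | z < x * y})
        =ᵐ[(volume : Measure ℝ)] (Ioi 0).indicator (fun x => ENNReal.ofReal (g x)) := by
      filter_upwards [h0] with x hx0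
      rcases lt_or_gt_of_ne hx0 with hneg | hpos
      · rw [exponentialPDF_of_neg hneg, zero_mul,
          Set.indicator_of_notMem (by simp [hneg.not_gt])]
      · rw [Set.indicator_of_mem (mem_Ioi.mpr hpos)]
        have hset : {y | z < x * y} = Ioi (z / x) := by
          ext y; simp [div_lt_iff₀ hpos, mul_comm]
        rw [hset, exponentialPDF_of_nonneg hpos.le,
          expMeasure_Ioi hω₂ (by positivity),
          ← ENNReal.ofReal_mul (by positivity)]
        congr 1
        rw [hg, mul_assoc, ← Real.exp_add]
        congr 2
        field_simp
        ring
    rw [lintegral_congr_ae h1, lintegral_indicator measurableSet_Ioi _,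
      ← ofReal_integral_eq_lintegral_ofReal hgint
        (ae_of_all _ fun x => hgnn x)]
  -- Step E : change of variables
  have hE : (∫ x in Ioi (0:ℝ), g x) = 2 * c * besselK 1 (2 * c) := by
    set b := ω₁ / c with hbdef
    have hb : 0 < b := by positivity
    clear_value b
    have hbK : besselK 1 (2 * c) = (1/2) * ∫ t in Ioi (0:ℝ), Real.exp (-c * (t + 1/t)) := by
      unfold besselK
      congr 1
      refine setIntegral_congr_fun measurableSet_Ioi fun t ht => ?_
      rw [sub_self, Real.rpow_zero, one_mul]
      congr 2
      ring
    have hcv : (∫ x in Ioi (0:ℝ), Real.exp (-c * (b * x + 1/(b * x))))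
        = b⁻¹ * ∫ t in Ioi (0:ℝ), Real.exp (-c * (t + 1/t)) := by
      have := integral_comp_mul_left_Ioi (fun t => Real.exp (-c * (t + 1/t))) 0 hb
      simpa [mul_zero, smul_eq_mul] using this
    have hgeq : EqOn g (fun x => ω₁ * Real.exp (-c * (b * x + 1/(b * x)))) (Ioi 0) := by
      intro x hx
      have hx0 : (0:ℝ) < x := hx
      have harg : -(ω₁ * x) - ω₂ * z / x = -c * (b * x + 1/(b * x)) := by
        rw [hbdef]
        field_simp
        linear_combination hc2
      simp only [hg, harg]
    rw [setIntegral_congr_fun measurableSet_Ioi hgeq, integral_const_mul, hcv, hbK, hbdef]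
    field_simp
  rw [hA, hB, hC, hD, ENNReal.toReal_ofReal (integral_nonneg fun x => hgnn x), hE]
end

section
/- Let X have the noncentral density f(x) = ω e^{-ω(x + μ x₀)} I₀(2ω √(μ x₀ x)) on (0,∞), where ω > 0, μ ∈ [0,1), x₀ ≥ 0. Then f is a probability density, i.e., ∫₀^∞ f(x) dx = 1. -/
open Real Set MeasureTheory intervalIntegral
open scoped Nat
set_option maxHeartbeats 1000000

lemma my_integral_cos_pow_odd (k : ℕ) : ∫ x in (0:ℝ)..π, Real.cos x ^ (2*k+1) = 0 := by
  induction k with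
  | zero => simp
  | succ n ih =>
    have h : 2*(n+1)+1 = (2*n+1) + 2 := by ring
    rw [h, integral_cos_pow]
    simp [ih]

lemma my_integral_cos_pow_even (k : ℕ) :
    ∫ x in (0:ℝ)..π, Real.cos x ^ (2*k) = π * (2*k).factorial / (4^k * (k.factorial:ℝ)^2) := by
  induction k with
  | zero => simp
  | succ n ih =>
    have h : 2*(n+1) = (2*n) + 2 := by ring
    rw [h, integral_cos_pow, ih]
    have h1 : ((2*n).factorial : ℝ) > 0 := by positivity
    have h2 : ((n.factorial : ℝ)) > 0 := by positivity
    rw [Real.sin_pi, Real.sin_zero]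
    have e1 : (2*n+2).factorial = (2*n+2) * ((2*n+1) * (2*n).factorial) := by
      have h3 : 2*n+2 = (2*n+1)+1 := by ring
      rw [h3, Nat.factorial_succ, Nat.factorial_succ]
    rw [e1, Nat.factorial_succ]
    push_cast
    field_simp
    ring

/-- Modified Bessel function of the first kind of order 0. -/
noncomputable def besselI0 (z : ℝ) : ℝ :=
  (1 / Real.pi) * ∫ θ in (0:ℝ)..Real.pi, Real.exp (z * Real.cos θ)

lemma summable_besselterm (z : ℝ) :
    Summable (fun k : ℕ => z^(2*k) / (4^k * ((k.factorial:ℝ))^2)) := by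
  refine Summable.of_nonneg_of_le (fun k => by rw [pow_mul]; positivity) (fun k => ?_)
    (Real.summable_pow_div_factorial (z^2/4))
  have h1 : (1:ℝ) ≤ (k.factorial : ℝ) := by exact_mod_cast k.factorial_pos
  have h2 : (k.factorial : ℝ) ≤ ((k.factorial : ℝ))^2 := le_self_pow₀ h1 two_ne_zero
  calc z^(2*k) / (4^k * ((k.factorial:ℝ))^2)
      ≤ z^(2*k) / (4^k * (k.factorial:ℝ)) := by
        apply div_le_div_of_nonneg_left ?_ (by positivity) ?_
        · rw [pow_mul]; positivity
        · gcongr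
    _ = (z^2/4)^k / (k.factorial:ℝ) := by
        rw [pow_mul, div_pow]; ring

lemma besselI0_eq_tsum (z : ℝ) :
    besselI0 z = ∑' k : ℕ, z^(2*k) / (4^k * ((k.factorial:ℝ))^2) := by
  have hcont : ∀ n : ℕ, Continuous (fun θ : ℝ => (z * Real.cos θ)^n / n.factorial) := by
    intro n; fun_prop
  set f : ℕ → C(ℝ, ℝ) := fun n => ⟨_, hcont n⟩ with hf
  have hsum : Summable fun n : ℕ =>
      ‖(f n).restrict (⟨uIcc 0 π, isCompact_uIcc⟩ : TopologicalSpace.Compacts ℝ)‖ := by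
    refine Summable.of_nonneg_of_le (fun n => norm_nonneg _) (fun n => ?_)
      (Real.summable_pow_div_factorial |z|)
    rw [ContinuousMap.norm_le _ (by positivity)]
    rintro ⟨x, hx⟩
    simp only [ContinuousMap.restrict_apply, hf, ContinuousMap.coe_mk]
    rw [Real.norm_eq_abs, abs_div, abs_pow, abs_mul, Nat.abs_cast]
    gcongr
    exact mul_le_of_le_one_right (abs_nonneg z) (Real.abs_cos_le_one x)
  have key := intervalIntegral.tsum_intervalIntegral_eq_of_summable_norm (a := 0) (b := π) hsum
  have hexp : ∀ θ : ℝ, Real.exp (z * Real.cos θ) = ∑' n : ℕ, (z * Real.cos θ)^n / n.factorial := by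
    intro θ
    rw [Real.exp_eq_exp_ℝ, NormedSpace.exp_eq_tsum_div]
  have hint : ∀ n : ℕ, (∫ θ in (0:ℝ)..π, f n θ)
      = z^n / n.factorial * ∫ θ in (0:ℝ)..π, Real.cos θ ^ n := by
    intro n
    simp only [hf, ContinuousMap.coe_mk]
    simp_rw [mul_pow, mul_div_right_comm]
    rw [intervalIntegral.integral_const_mul]
  have geven : ∀ k : ℕ, (∫ θ in (0:ℝ)..π, f (2*k) θ)
      = π * (z^(2*k) / (4^k * ((k.factorial:ℝ))^2)) := by
    intro k
    rw [hint, my_integral_cos_pow_even]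
    have h1 : ((2*k).factorial : ℝ) ≠ 0 := by positivity
    have h2 : ((k.factorial : ℝ)) ≠ 0 := by positivity
    field_simp
  have godd : ∀ k : ℕ, (∫ θ in (0:ℝ)..π, f (2*k+1) θ) = 0 := by
    intro k; rw [hint, my_integral_cos_pow_odd, mul_zero]
  have hS := summable_besselterm z
  have he : Summable (fun k : ℕ => ∫ θ in (0:ℝ)..π, f (2*k) θ) := by
    refine ((hS.mul_left π).congr ?_); intro k; exact (geven k).symm
  have ho : Summable (fun k : ℕ => ∫ θ in (0:ℝ)..π, f (2*k+1) θ) := by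
    refine summable_zero.congr ?_; intro k; exact (godd k).symm
  have hsplit := tsum_even_add_odd (f := fun n : ℕ => ∫ θ in (0:ℝ)..π, f n θ) he ho
  rw [besselI0]
  have hrw : (∫ θ in (0:ℝ)..π, Real.exp (z * Real.cos θ)) = ∑' n : ℕ, ∫ θ in (0:ℝ)..π, f n θ := by
    rw [key]
    apply intervalIntegral.integral_congr
    intro θ _
    simp only [hf, ContinuousMap.coe_mk]
    exact hexp θ
  rw [hrw, ← hsplit]
  simp only [godd, geven, tsum_zero, add_zero, tsum_mul_left]
  rw [← mul_assoc, one_div, inv_mul_cancel₀ Real.pi_ne_zero, one_mul]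

lemma integrableOn_exp_neg_mul_pow {ω : ℝ} (hω : 0 < ω) (k : ℕ) :
    IntegrableOn (fun x : ℝ => Real.exp (-(ω*x)) * x^k) (Ioi 0) := by
  refine integrable_of_isBigO_exp_neg (b := ω/2) (half_pos hω)
    (Continuous.continuousOn (by fun_prop)) ?_
  have h0 : Filter.Tendsto (fun x : ℝ => x^k * Real.exp (-((ω/2)*x))) Filter.atTop (nhds 0) := by
    have h1 := ((tendsto_pow_mul_exp_neg_atTop_nhds_zero k).comp
      (Filter.tendsto_id.const_mul_atTop (half_pos hω))).const_mul ((2/ω)^k)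
    rw [mul_zero] at h1
    refine h1.congr fun x => ?_
    simp only [Function.comp_apply, id_eq]
    rw [← mul_assoc, ← mul_pow]
    congr 2
    field_simp
  have h1 : (fun x : ℝ => x^k * Real.exp (-((ω/2)*x)))
      =O[Filter.atTop] (fun _ : ℝ => (1:ℝ)) := h0.isBigO_one ℝ
  have h2 := h1.mul (Asymptotics.isBigO_refl (fun x : ℝ => Real.exp (-((ω/2)*x))) Filter.atTop)
  refine (h2.congr (fun x => ?_) (fun x => by rw [one_mul, neg_mul]))
  rw [mul_assoc, ← Real.exp_add]
  ring_nf

lemma integral_exp_neg_mul_pow {ω : ℝ} (hω : 0 < ω) (k : ℕ) :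
    ∫ x in Ioi (0:ℝ), Real.exp (-(ω*x)) * x^k = (k.factorial : ℝ) / ω^(k+1) := by
  have h := Real.integral_rpow_mul_exp_neg_mul_Ioi (a := (k:ℝ)+1) (by positivity) hω
  have heq : ∀ t ∈ Ioi (0:ℝ), t ^ (((k:ℝ)+1)-1) * Real.exp (-(ω*t))
      = Real.exp (-(ω*t)) * t^k := by
    intro t ht
    rw [add_sub_cancel_right, Real.rpow_natCast, mul_comm]
  rw [setIntegral_congr_fun measurableSet_Ioi heq] at h
  rw [h]
  have hg : Real.Gamma ((k:ℝ)+1) = k.factorial := Real.Gamma_nat_eq_factorial k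
  rw [hg]
  have hr : ((1:ℝ)/ω) ^ ((k:ℝ)+1) = ((1:ℝ)/ω)^(k+1) := by
    rw [show ((k:ℝ)+1) = ((k+1 : ℕ):ℝ) by push_cast; ring, Real.rpow_natCast]
  rw [hr, div_pow, one_pow]
  ring

/-- The noncentral density `f(x) = ω e^{-ω(x+μx₀)} I₀(2ω√(μx₀x))` integrates to 1 on `(0,∞)`. -/
theorem noncentral_density_integrates_to_one (ω μ x₀ : ℝ)
    (hω : 0 < ω) (hμ : μ ∈ Ico (0:ℝ) 1) (hx₀ : 0 ≤ x₀) :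
    ∫ x in Ioi (0:ℝ),
      ω * Real.exp (-(ω * (x + μ * x₀))) * besselI0 (2 * ω * Real.sqrt (μ * x₀ * x)) = 1 := by
  obtain ⟨hμ0, -⟩ := hμ
  set c := μ * x₀ with hc
  have hc0 : 0 ≤ c := mul_nonneg hμ0 hx₀
  set g : ℕ → ℝ → ℝ := fun k x =>
    (ω * Real.exp (-(ω*c)) * (ω^2*c)^k / ((k.factorial:ℝ))^2) * (Real.exp (-(ω*x)) * x^k)
    with hg
  have hpt : ∀ x ∈ Ioi (0:ℝ),
      ω * Real.exp (-(ω * (x + c))) * besselI0 (2 * ω * Real.sqrt (c * x))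
        = ∑' k : ℕ, g k x := by
    intro x hx
    have hx0 : (0:ℝ) < x := hx
    rw [besselI0_eq_tsum, ← tsum_mul_left]
    congr 1; funext k
    have hsq : Real.sqrt (c*x) ^ 2 = c * x := Real.sq_sqrt (by positivity)
    have hzz : (2 * ω * Real.sqrt (c*x)) ^ (2*k) = 4^k * ((ω^2*c)^k * x^k) := by
      rw [pow_mul, show (2*ω*Real.sqrt (c*x))^2 = 4*((ω^2*c)*x) by
        rw [mul_pow, mul_pow, hsq]; ring]
      rw [mul_pow, mul_pow]
    rw [hzz, hg]
    have h4 : ((4:ℝ))^k ≠ 0 := by positivity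
    have hf : ((k.factorial:ℝ)) ≠ 0 := by positivity
    rw [show -(ω*(x+c)) = -(ω*c) + -(ω*x) by ring, Real.exp_add]
    field_simp
  rw [setIntegral_congr_fun measurableSet_Ioi hpt]
  have hmeas : ∀ k : ℕ, AEStronglyMeasurable (g k) (volume.restrict (Ioi 0)) := by
    intro k
    exact Continuous.aestronglyMeasurable (by rw [hg]; fun_prop)
  have hInt : ∀ k : ℕ, IntegrableOn (g k) (Ioi 0) := by
    intro k
    exact (integrableOn_exp_neg_mul_pow hω k).const_mul _
  have hval : ∀ k : ℕ, ∫ x in Ioi (0:ℝ), g k x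
      = Real.exp (-(ω*c)) * ((ω*c)^k / (k.factorial:ℝ)) := by
    intro k
    rw [hg]
    simp only
    rw [MeasureTheory.integral_const_mul, integral_exp_neg_mul_pow hω k]
    have hf : ((k.factorial:ℝ)) ≠ 0 := by positivity
    have hω' : ω ≠ 0 := hω.ne'
    field_simp
    ring
  have hnn : ∀ k : ℕ, 0 ≤ᵐ[volume.restrict (Ioi (0:ℝ))] g k := by
    intro k
    filter_upwards [ae_restrict_mem measurableSet_Ioi] with x hx
    have hx0 : (0:ℝ) < x := hx
    rw [hg]
    positivity
  have hvnn : ∀ k : ℕ, 0 ≤ Real.exp (-(ω*c)) * ((ω*c)^k / (k.factorial:ℝ)) := by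
    intro k; positivity
  have hvsum : Summable (fun k : ℕ => Real.exp (-(ω*c)) * ((ω*c)^k / (k.factorial:ℝ))) :=
    (Real.summable_pow_div_factorial (ω*c)).mul_left _
  have hfin : ∑' k : ℕ, ∫⁻ x, ‖g k x‖₊ ∂(volume.restrict (Ioi (0:ℝ))) ≠ ⊤ := by
    have hlin : ∀ k : ℕ, ∫⁻ x, ‖g k x‖₊ ∂(volume.restrict (Ioi (0:ℝ)))
        = ENNReal.ofReal (Real.exp (-(ω*c)) * ((ω*c)^k / (k.factorial:ℝ))) := by
      intro k
      rw [← hval k, MeasureTheory.ofReal_integral_eq_lintegral_ofReal (hInt k) (hnn k)]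
      refine lintegral_congr_ae ?_
      filter_upwards [hnn k] with x hx
      rw [← Real.enorm_eq_ofReal hx, enorm_eq_nnnorm]
    simp_rw [hlin]
    rw [← ENNReal.ofReal_tsum_of_nonneg hvnn hvsum]
    exact ENNReal.ofReal_ne_top
  rw [MeasureTheory.integral_tsum hmeas hfin, tsum_congr hval, tsum_mul_left]
  have hexp : ∑' k : ℕ, ((ω*c)^k / (k.factorial:ℝ)) = Real.exp (ω*c) := by
    rw [Real.exp_eq_exp_ℝ, NormedSpace.exp_eq_tsum_div]
  rw [hexp, ← Real.exp_add]
  simp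
end

section
/- Let ω₁, ω₂ > 0 and z > 0. For nonnegative integers k, n, ∫₀^∞ ∫₀^{z/y} x^k e^{-ω₁ x} y^n e^{-ω₂ y} dx dy = (k!/ω₁^{k+1}) [ n!/ω₂^{n+1} - Σ_{l=0}^{k} (1/l!) ∫₀^∞ (z ω₁)^l y^{n-l} e^{-z ω₁ / y - ω₂ y} dy ]. -/
open Real Set MeasureTheory

/-- Closed form for the truncated Gamma-type interval integral. -/
lemma inner_formula (ω : ℝ) (hω : 0 < ω) (k : ℕ) (b : ℝ) :
    ∫ x in (0:ℝ)..b, x ^ k * Real.exp (-ω * x) =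
      ((Nat.factorial k : ℝ) / ω ^ (k + 1)) *
        (1 - Real.exp (-ω * b) *
          ∑ l ∈ Finset.range (k + 1), (ω * b) ^ l / (Nat.factorial l : ℝ)) := by
  have hω' : ω ≠ 0 := ne_of_gt hω
  induction k with
  | zero =>
      have hder : ∀ x ∈ Set.uIcc (0:ℝ) b,
          HasDerivAt (fun t => -(Real.exp (-ω * t)) / ω) (Real.exp (-ω * x)) x := by
        intro x _
        have h1 : HasDerivAt (fun t : ℝ => -ω * t) (-ω) x := by
          simpa using (hasDerivAt_id x).const_mul (-ω)
        have h2 := (h1.exp).neg.div_const ω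
        refine h2.congr_deriv ?_
        field_simp
      have hint : IntervalIntegrable (fun x => Real.exp (-ω * x)) volume 0 b :=
        (Real.continuous_exp.comp (continuous_const.mul continuous_id)).intervalIntegrable 0 b
      have := intervalIntegral.integral_eq_sub_of_hasDerivAt hder hint
      simp only [pow_zero, one_mul] at this ⊢
      rw [this]
      simp [Nat.factorial]
      field_simp
      ring
  | succ k ih =>
      have hu : ∀ x ∈ Set.uIcc (0:ℝ) b,
          HasDerivAt (fun t : ℝ => t ^ (k + 1)) (((k:ℝ) + 1) * x ^ k) x := by
        intro x _
        simpa using (hasDerivAt_pow (k + 1) x)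
      have hv : ∀ x ∈ Set.uIcc (0:ℝ) b,
          HasDerivAt (fun t => -(Real.exp (-ω * t)) / ω) (Real.exp (-ω * x)) x := by
        intro x _
        have h1 : HasDerivAt (fun t : ℝ => -ω * t) (-ω) x := by
          simpa using (hasDerivAt_id x).const_mul (-ω)
        have h2 := (h1.exp).neg.div_const ω
        refine h2.congr_deriv ?_
        field_simp
      have hu' : IntervalIntegrable (fun x => ((k:ℝ) + 1) * x ^ k) volume 0 b :=
        (continuous_const.mul (continuous_pow k)).intervalIntegrable 0 b
      have hv' : IntervalIntegrable (fun x => Real.exp (-ω * x)) volume 0 b :=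
        (Real.continuous_exp.comp (continuous_const.mul continuous_id)).intervalIntegrable 0 b
      have ibp := intervalIntegral.integral_mul_deriv_eq_deriv_mul hu hv hu' hv'
      have hre : (∫ x in (0:ℝ)..b, ((k:ℝ) + 1) * x ^ k * (-(Real.exp (-ω * x)) / ω))
          = (-((k:ℝ) + 1) / ω) * ∫ x in (0:ℝ)..b, x ^ k * Real.exp (-ω * x) := by
        rw [← intervalIntegral.integral_const_mul]
        apply intervalIntegral.integral_congr
        intro x _
        ring
      rw [hre, ih] at ibp
      rw [Finset.sum_range_succ (fun l => (ω * b) ^ l / (Nat.factorial l : ℝ)) (k+1), ibp]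
      have hfact : ((k + 1).factorial : ℝ) = ((k : ℝ) + 1) * (k.factorial : ℝ) := by
        rw [Nat.factorial_succ]; push_cast; ring
      have hfk : (k.factorial : ℝ) ≠ 0 := Nat.cast_ne_zero.mpr (Nat.factorial_ne_zero k)
      have hfk1 : ((k+1).factorial : ℝ) ≠ 0 := Nat.cast_ne_zero.mpr (Nat.factorial_ne_zero _)
      rw [hfact]
      field_simp
      ring

lemma integrable_pow_exp (ω : ℝ) (hω : 0 < ω) (n : ℕ) :
    IntegrableOn (fun y : ℝ => y ^ n * Real.exp (-ω * y)) (Ioi 0) := by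
  have h := integrableOn_rpow_mul_exp_neg_mul_rpow (s := (n:ℝ)) (p := 1)
    (by exact lt_of_lt_of_le neg_one_lt_zero (Nat.cast_nonneg n)) one_pos hω
  refine h.congr_fun (fun y hy => ?_) measurableSet_Ioi
  dsimp only
  rw [Real.rpow_natCast, Real.rpow_one]

lemma integral_pow_exp (ω : ℝ) (hω : 0 < ω) (n : ℕ) :
    ∫ y in Ioi (0:ℝ), y ^ n * Real.exp (-ω * y)
      = (Nat.factorial n : ℝ) / ω ^ (n + 1) := by
  have h := Real.integral_rpow_mul_exp_neg_mul_Ioi (a := (n:ℝ) + 1) (r := ω)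
    (by positivity) hω
  rw [Real.Gamma_nat_eq_factorial] at h
  rw [show ((n:ℝ) + 1) = ((n + 1 : ℕ) : ℝ) by push_cast; ring, Real.rpow_natCast] at h
  rw [show (∫ y in Ioi (0:ℝ), y ^ n * Real.exp (-ω * y))
      = ∫ t in Ioi (0:ℝ), t ^ (((n + 1 : ℕ) : ℝ) - 1) * Real.exp (-(ω * t)) from ?_, h]
  · rw [one_div, inv_pow, div_eq_mul_inv, mul_comm]
  · refine setIntegral_congr_fun measurableSet_Ioi (fun t ht => ?_)
    rw [show ((n + 1 : ℕ) : ℝ) - 1 = (n:ℝ) by push_cast; ring, Real.rpow_natCast, neg_mul]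

lemma g_integrable (ω₂ c : ℝ) (hω₂ : 0 < ω₂) (hc : 0 < c) (n l : ℕ) :
    IntegrableOn (fun y : ℝ => c ^ l * y ^ ((n : ℝ) - l) * Real.exp (-c / y - ω₂ * y))
      (Ioi 0) := by
  have hmeas : AEStronglyMeasurable
      (fun y : ℝ => c ^ l * y ^ ((n : ℝ) - l) * Real.exp (-c / y - ω₂ * y))
      (volume.restrict (Ioi 0)) := by
    apply Measurable.aestronglyMeasurable
    fun_prop
  refine Integrable.mono' (((integrable_pow_exp ω₂ hω₂ n).const_mul
    (Nat.factorial l : ℝ))) hmeas ?_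
  rw [ae_restrict_iff' measurableSet_Ioi]
  filter_upwards with y hy
  have hy0 : (0:ℝ) < y := hy
  have hb : Real.exp (-c / y) ≤ (Nat.factorial l : ℝ) * y ^ l / c ^ l := by
    have h1 : (c / y) ^ l / (Nat.factorial l : ℝ) ≤ Real.exp (c / y) :=
      Real.pow_div_factorial_le_exp (c / y) (by positivity) l
    have h2 : Real.exp (-c / y) = (Real.exp (c / y))⁻¹ := by
      rw [← Real.exp_neg, neg_div]
    rw [h2]
    rw [inv_le_comm₀ (Real.exp_pos _) (by positivity)]
    calc ((Nat.factorial l : ℝ) * y ^ l / c ^ l)⁻¹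
        = (c / y) ^ l / (Nat.factorial l : ℝ) := by
          rw [div_pow]; field_simp
      _ ≤ Real.exp (c / y) := h1
  have hnorm : ‖c ^ l * y ^ ((n : ℝ) - l) * Real.exp (-c / y - ω₂ * y)‖
      = c ^ l * y ^ ((n : ℝ) - l) * Real.exp (-c / y - ω₂ * y) := by
    rw [Real.norm_eq_abs, abs_of_nonneg]
    have := Real.rpow_nonneg hy0.le ((n : ℝ) - l)
    positivity
  rw [hnorm]
  have hsplit : Real.exp (-c / y - ω₂ * y) = Real.exp (-c / y) * Real.exp (-(ω₂ * y)) := by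
    rw [← Real.exp_add]; ring_nf
  have hpow : y ^ ((n : ℝ) - l) = y ^ n / y ^ l := by
    rw [Real.rpow_sub hy0, Real.rpow_natCast, Real.rpow_natCast]
  rw [hsplit, hpow]
  calc c ^ l * (y ^ n / y ^ l) * (Real.exp (-c / y) * Real.exp (-(ω₂ * y)))
      ≤ c ^ l * (y ^ n / y ^ l) *
          (((Nat.factorial l : ℝ) * y ^ l / c ^ l) * Real.exp (-(ω₂ * y))) := by
        apply mul_le_mul_of_nonneg_left
        · exact mul_le_mul_of_nonneg_right hb (Real.exp_pos _).le
        · positivity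
    _ = (Nat.factorial l : ℝ) * (y ^ n * Real.exp (-ω₂ * y)) := by
        rw [neg_mul]; field_simp

/-- Iterated integral identity:
`∫₀^∞ ∫₀^{z/y} x^k e^{-ω₁x} y^n e^{-ω₂y} dx dy
 = (k!/ω₁^{k+1}) [ n!/ω₂^{n+1} - ∑_{l≤k} (1/l!) ∫₀^∞ (zω₁)^l y^{n-l} e^{-zω₁/y - ω₂y} dy ]`. -/
theorem iterated_integral_eq (ω₁ ω₂ z : ℝ) (hω₁ : 0 < ω₁) (hω₂ : 0 < ω₂) (hz : 0 < z)
    (k n : ℕ) :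
    ∫ y in Ioi (0:ℝ),
        (∫ x in (0:ℝ)..(z / y), x ^ k * Real.exp (-ω₁ * x)) * (y ^ n * Real.exp (-ω₂ * y)) =
      ((Nat.factorial k : ℝ) / ω₁ ^ (k + 1)) *
        ((Nat.factorial n : ℝ) / ω₂ ^ (n + 1) -
          ∑ l ∈ Finset.range (k + 1), (1 / (Nat.factorial l : ℝ)) *
            ∫ y in Ioi (0:ℝ),
              (z * ω₁) ^ l * y ^ ((n : ℝ) - l) * Real.exp (-(z * ω₁) / y - ω₂ * y)) := by
  set C : ℝ := (Nat.factorial k : ℝ) / ω₁ ^ (k + 1) with hC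
  have hc : 0 < z * ω₁ := mul_pos hz hω₁
  -- pointwise rewriting of the integrand
  have hcongr : ∀ y ∈ Ioi (0:ℝ),
      (∫ x in (0:ℝ)..(z / y), x ^ k * Real.exp (-ω₁ * x)) * (y ^ n * Real.exp (-ω₂ * y))
        = C * (y ^ n * Real.exp (-ω₂ * y)) -
          ∑ l ∈ Finset.range (k + 1), (C * (1 / (Nat.factorial l : ℝ))) *
            ((z * ω₁) ^ l * y ^ ((n : ℝ) - l) * Real.exp (-(z * ω₁) / y - ω₂ * y)) := by
    intro y hy
    have hy0 : (0:ℝ) < y := hy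
    have hterm : ∀ l : ℕ, (z * ω₁) ^ l * y ^ ((n : ℝ) - l) * Real.exp (-(z * ω₁) / y - ω₂ * y)
        = ((ω₁ * (z / y)) ^ l * Real.exp (-ω₁ * (z / y))) * (y ^ n * Real.exp (-ω₂ * y)) := by
      intro l
      rw [Real.rpow_sub hy0, Real.rpow_natCast, Real.rpow_natCast,
        show -(z * ω₁) / y - ω₂ * y = (-ω₁ * (z / y)) + (-ω₂ * y) by ring, Real.exp_add]
      field_simp
      ring_nf
      rw [mul_assoc _ (y ^ l), ← mul_pow y, mul_inv_cancel₀ hy0.ne', one_pow, mul_one]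
    rw [inner_formula ω₁ hω₁ k (z / y)]
    simp only [hterm]
    rw [mul_sub, mul_one, sub_mul]
    congr 1
    simp only [Finset.mul_sum, Finset.sum_mul]
    exact Finset.sum_congr rfl fun l _ => by ring
  rw [setIntegral_congr_fun measurableSet_Ioi hcongr]
  have h0 : IntegrableOn (fun y : ℝ => y ^ n * Real.exp (-ω₂ * y)) (Ioi 0) :=
    integrable_pow_exp ω₂ hω₂ n
  have hg : ∀ l : ℕ, IntegrableOn
      (fun y : ℝ => (z * ω₁) ^ l * y ^ ((n : ℝ) - l) * Real.exp (-(z * ω₁) / y - ω₂ * y))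
      (Ioi 0) := fun l => g_integrable ω₂ (z * ω₁) hω₂ hc n l
  rw [MeasureTheory.integral_sub (h0.const_mul C)
      (MeasureTheory.integrable_finset_sum _ (fun l _ => (hg l).const_mul _)),
    MeasureTheory.integral_finset_sum _ (fun l _ => (hg l).const_mul _),
    integral_const_mul, integral_pow_exp ω₂ hω₂ n]
  simp only [integral_const_mul]
  rw [mul_sub, Finset.mul_sum]
  congr 1
  exact Finset.sum_congr rfl fun l _ => by ring
end

section
/- Let ω₁, ω₂ > 0, z > 0, and k, n nonnegative integers. Then ∫₀^∞ γ(k+1, z ω₁/y) y^n e^{-ω₂ y} dy = k! ω₂^{-(n+1)} ( n! - Σ_{l=0}^{k} (2 (z ω₁ ω₂)^{(n+l+1)/2} / l!) K_{n-l+1}(2√(z ω₁ ω₂)) ), where γ is the lower incomplete gamma function and K_ν the modified Bessel function of the second kind. -/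
open Real Set MeasureTheory

/-- The lower incomplete gamma function `γ(α, x) = ∫₀ˣ e^{-t} t^{α-1} dt`
for positive integer order `α`. -/
noncomputable def lowerGamma (α : ℕ) (x : ℝ) : ℝ :=
  ∫ t in (0:ℝ)..x, Real.exp (-t) * t ^ (α - 1)

lemma lowerGamma_eq (k : ℕ) (x : ℝ) :
    lowerGamma (k + 1) x =
      (Nat.factorial k : ℝ) *
        (1 - Real.exp (-x) * ∑ l ∈ Finset.range (k + 1), x ^ l / (Nat.factorial l : ℝ)) := by
  have hF : ∀ t : ℝ, HasDerivAt
      (fun t => -(Nat.factorial k : ℝ) *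
        (Real.exp (-t) * ∑ l ∈ Finset.range (k + 1), t ^ l / (Nat.factorial l : ℝ)))
      (Real.exp (-t) * t ^ k) t := by
    intro t
    have hS : HasDerivAt
        (fun t : ℝ => ∑ l ∈ Finset.range (k + 1), t ^ l / (Nat.factorial l : ℝ))
        (∑ l ∈ Finset.range k, t ^ l / (Nat.factorial l : ℝ)) t := by
      have h := HasDerivAt.fun_sum
        (fun l (_ : l ∈ Finset.range (k + 1)) =>
          ((hasDerivAt_pow l t).div_const (Nat.factorial l : ℝ)))
      refine h.congr_deriv ?_
      symm
      rw [Finset.sum_range_succ']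
      simp only [Nat.cast_zero, zero_mul, Nat.factorial_zero, Nat.cast_one, zero_div, add_zero]
      refine Finset.sum_congr rfl fun i _ => ?_
      rw [Nat.add_sub_cancel, Nat.factorial_succ]
      push_cast
      field_simp
    have hE : HasDerivAt (fun t : ℝ => Real.exp (-t)) (-Real.exp (-t)) t := by
      simpa using ((hasDerivAt_neg t).exp)
    have := ((hE.fun_mul hS).const_mul (-(Nat.factorial k : ℝ)))
    refine this.congr_deriv ?_
    symm
    rw [Finset.sum_range_succ]
    field_simp
    ring
  have hcont : Continuous fun t : ℝ => Real.exp (-t) * t ^ k := by continuity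
  have := intervalIntegral.integral_eq_sub_of_hasDerivAt (f := fun t =>
      -(Nat.factorial k : ℝ) *
        (Real.exp (-t) * ∑ l ∈ Finset.range (k + 1), t ^ l / (Nat.factorial l : ℝ)))
      (a := 0) (b := x) (fun t _ => hF t) (hcont.intervalIntegrable 0 x)
  have h0 : (∑ l ∈ Finset.range (k + 1), (0:ℝ) ^ l / (Nat.factorial l : ℝ)) = 1 := by
    rw [Finset.sum_range_succ']
    simp
  rw [lowerGamma, Nat.add_sub_cancel, this]
  simp only [neg_zero, Real.exp_zero, one_mul]
  rw [h0]
  ring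

lemma integral_besselK_aux (ν a b : ℝ) (ha : 0 < a) (hb : 0 < b) :
    ∫ y in Ioi (0:ℝ), y ^ (ν - 1) * Real.exp (-(a / y) - b * y) =
      (a / b) ^ (ν / 2) * (2 * besselK ν (2 * Real.sqrt (a * b))) := by
  set c := Real.sqrt (a / b) with hcdef
  set s := Real.sqrt (a * b) with hsdef
  have hc0 : 0 < c := Real.sqrt_pos.2 (by positivity)
  have hs0 : 0 < s := Real.sqrt_pos.2 (by positivity)
  have hcs : c * s = a := by
    rw [hcdef, hsdef, ← Real.sqrt_mul (by positivity)]
    rw [show a / b * (a * b) = a ^ 2 by field_simp]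
    exact Real.sqrt_sq ha.le
  have hbc : b * c = s := by
    rw [hcdef, hsdef]
    rw [show b * Real.sqrt (a / b) = Real.sqrt (b^2) * Real.sqrt (a/b) by
      rw [Real.sqrt_sq hb.le]]
    rw [← Real.sqrt_mul (by positivity)]
    congr 1
    field_simp
  have key := integral_comp_mul_left_Ioi
      (fun y => y ^ (ν - 1) * Real.exp (-(a / y) - b * y)) 0 hc0
  simp only [mul_zero, smul_eq_mul] at key
  have heq : ∀ t ∈ Ioi (0:ℝ),
      (c * t) ^ (ν - 1) * Real.exp (-(a / (c * t)) - b * (c * t)) =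
        c ^ (ν - 1) * (t ^ (ν - 1) * Real.exp (-(2 * s / 2) * (t + 1 / t))) := by
    intro t ht
    have ht0 : 0 < t := ht
    rw [Real.mul_rpow hc0.le ht0.le]
    have h1 : a / (c * t) = s / t := by
      rw [← hcs]; field_simp
    have h2 : b * (c * t) = s * t := by rw [← mul_assoc, hbc]
    rw [h1, h2]
    have : -(s / t) - s * t = -(2 * s / 2) * (t + 1 / t) := by
      field_simp; ring
    rw [this]; ring
  rw [setIntegral_congr_fun measurableSet_Ioi heq] at key
  rw [integral_const_mul] at key
  have : ∫ y in Ioi (0:ℝ), y ^ (ν - 1) * Real.exp (-(a / y) - b * y)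
      = c * (c ^ (ν - 1) * ∫ t in Ioi (0:ℝ),
          t ^ (ν - 1) * Real.exp (-(2 * s / 2) * (t + 1 / t))) := by
    rw [key, ← mul_assoc, mul_inv_cancel₀ hc0.ne', one_mul]
  rw [this, besselK]
  have hcpow : c * c ^ (ν - 1) = (a / b) ^ (ν / 2) := by
    have h1 : c * c ^ (ν - 1) = c ^ ν := by
      nth_rewrite 1 [← Real.rpow_one c]
      rw [← Real.rpow_add hc0]
      norm_num
    rw [h1, hcdef, Real.sqrt_eq_rpow, ← Real.rpow_mul (by positivity : (0:ℝ) ≤ a / b)]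
    congr 1
    ring
  rw [← hcpow]
  ring

lemma integrable_aux {a b : ℝ} (ha : 0 < a) (hb : 0 < b) (l n : ℕ) :
    IntegrableOn (fun y : ℝ => y ^ ((n:ℝ) - l + 1 - 1) * Real.exp (-(a / y) - b * y))
      (Ioi (0:ℝ)) := by
  have hbase : IntegrableOn (fun y : ℝ => y ^ (n:ℝ) * Real.exp (-b * y)) (Ioi (0:ℝ)) := by
    have := integrableOn_rpow_mul_exp_neg_mul_rpow (s := (n:ℝ)) (p := 1) (b := b)
      (by have := Nat.cast_nonneg (α := ℝ) n; linarith) one_pos hb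
    simpa [Real.rpow_one] using this
  have hg : IntegrableOn
      (fun y : ℝ => ((Nat.factorial l : ℝ) / a ^ l) * (y ^ (n:ℝ) * Real.exp (-b * y)))
      (Ioi (0:ℝ)) := hbase.const_mul _
  refine hg.mono' ?_ ?_
  · apply ContinuousOn.aestronglyMeasurable ?_ measurableSet_Ioi
    apply ContinuousOn.mul
    · exact fun y hy =>
        (Real.continuousAt_rpow_const y _ (Or.inl (ne_of_gt hy))).continuousWithinAt
    · apply Real.continuous_exp.comp_continuousOn
      apply ContinuousOn.sub
      · exact (continuousOn_const.div continuousOn_id fun y hy => ne_of_gt hy).neg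
      · exact (continuous_const.mul continuous_id).continuousOn
  · rw [ae_restrict_iff' measurableSet_Ioi]
    filter_upwards with y
    intro hy
    have hy0 : (0:ℝ) < y := hy
    have h1 : y ^ ((n:ℝ) - l + 1 - 1) = y ^ (n:ℕ) / y ^ (l:ℕ) := by
      rw [show (n:ℝ) - l + 1 - 1 = (n:ℝ) - (l:ℝ) by ring, Real.rpow_sub hy0,
        Real.rpow_natCast, Real.rpow_natCast]
    have hexp : Real.exp (-(a / y) - b * y) = Real.exp (-(a / y)) * Real.exp (-b * y) := by
      rw [← Real.exp_add]; ring_nf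
    have hkey : Real.exp (-(a / y)) / y ^ l ≤ (Nat.factorial l : ℝ) / a ^ l := by
      rw [div_le_div_iff₀ (by positivity) (by positivity), Real.exp_neg]
      have h2 := Real.pow_div_factorial_le_exp (x := a / y) (by positivity) l
      rw [div_pow, div_le_iff₀ (by positivity : (0:ℝ) < (Nat.factorial l : ℝ))] at h2
      have h3 : a ^ l ≤ Real.exp (a / y) * (Nat.factorial l : ℝ) * y ^ l := by
        rw [div_le_iff₀ (by positivity : (0:ℝ) < y ^ l)] at h2
        nlinarith [Real.exp_pos (a / y), pow_pos hy0 l]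
      calc (Real.exp (a / y))⁻¹ * a ^ l
          ≤ (Real.exp (a / y))⁻¹ * (Real.exp (a / y) * (Nat.factorial l : ℝ) * y ^ l) := by
            apply mul_le_mul_of_nonneg_left h3 (by positivity)
        _ = (Nat.factorial l : ℝ) * y ^ l := by
            field_simp
    have hnorm : ‖y ^ ((n:ℝ) - l + 1 - 1) * Real.exp (-(a / y) - b * y)‖
        = y ^ ((n:ℝ) - l + 1 - 1) * Real.exp (-(a / y) - b * y) := by
      rw [Real.norm_eq_abs, abs_of_nonneg]
      positivity
    rw [hnorm, h1, hexp, Real.rpow_natCast]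
    calc y ^ n / y ^ l * (Real.exp (-(a / y)) * Real.exp (-b * y))
        = (Real.exp (-(a / y)) / y ^ l) * (y ^ n * Real.exp (-b * y)) := by ring
      _ ≤ ((Nat.factorial l : ℝ) / a ^ l) * (y ^ n * Real.exp (-b * y)) := by
          apply mul_le_mul_of_nonneg_right hkey (by positivity)

/-- `∫₀^∞ γ(k+1, zω₁/y) y^n e^{-ω₂y} dy
  = k! ω₂^{-(n+1)} ( n! - ∑_{l≤k} (2(zω₁ω₂)^{(n+l+1)/2}/l!) K_{n-l+1}(2√(zω₁ω₂)) )`. -/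
theorem integral_lowerGamma_eq (ω₁ ω₂ z : ℝ) (hω₁ : 0 < ω₁) (hω₂ : 0 < ω₂) (hz : 0 < z)
    (k n : ℕ) :
    ∫ y in Ioi (0:ℝ), lowerGamma (k + 1) (z * ω₁ / y) * (y ^ n * Real.exp (-ω₂ * y)) =
      (Nat.factorial k : ℝ) * ω₂ ^ (-(n : ℝ) - 1) *
        ((Nat.factorial n : ℝ) -
          ∑ l ∈ Finset.range (k + 1),
            (2 * (z * ω₁ * ω₂) ^ (((n : ℝ) + l + 1) / 2) / (Nat.factorial l : ℝ)) *
              besselK ((n : ℝ) - l + 1) (2 * Real.sqrt (z * ω₁ * ω₂))) := by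
  set a := z * ω₁ with hadef
  have ha : 0 < a := by positivity
  -- Step 1: rewrite the integrand
  have hstep : ∀ y ∈ Ioi (0:ℝ),
      lowerGamma (k + 1) (a / y) * (y ^ n * Real.exp (-ω₂ * y)) =
        (Nat.factorial k : ℝ) * (y ^ n * Real.exp (-ω₂ * y)) -
          ∑ l ∈ Finset.range (k + 1),
            ((Nat.factorial k : ℝ) * a ^ l / (Nat.factorial l : ℝ)) *
              (y ^ ((n:ℝ) - l + 1 - 1) * Real.exp (-(a / y) - ω₂ * y)) := by
    intro y hy
    have hy0 : (0:ℝ) < y := hy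
    rw [lowerGamma_eq]
    have hterm : ∀ l : ℕ,
        ((Nat.factorial k : ℝ) * a ^ l / (Nat.factorial l : ℝ)) *
          (y ^ ((n:ℝ) - l + 1 - 1) * Real.exp (-(a / y) - ω₂ * y)) =
        ((a / y) ^ l / (Nat.factorial l : ℝ)) *
          ((Nat.factorial k : ℝ) * Real.exp (-(a / y)) * (y ^ n * Real.exp (-ω₂ * y))) := by
      intro l
      rw [show (n:ℝ) - l + 1 - 1 = (n:ℝ) - (l:ℝ) by ring, Real.rpow_sub hy0,
        Real.rpow_natCast, Real.rpow_natCast,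
        show -(a / y) - ω₂ * y = -(a / y) + -(ω₂ * y) by ring,
        Real.exp_add, div_pow]
      have hfl : (0:ℝ) < (Nat.factorial l : ℝ) := by positivity
      field_simp
    rw [Finset.sum_congr rfl fun l _ => hterm l, ← Finset.sum_mul]
    ring
  rw [setIntegral_congr_fun measurableSet_Ioi hstep]
  -- Step 2: integrability facts
  have hIpow : IntegrableOn (fun y : ℝ => y ^ n * Real.exp (-ω₂ * y)) (Ioi (0:ℝ)) := by
    have := integrableOn_rpow_mul_exp_neg_mul_rpow (s := (n:ℝ)) (p := 1) (b := ω₂)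
      (by have := Nat.cast_nonneg (α := ℝ) n; linarith) one_pos hω₂
    simpa [Real.rpow_one, Real.rpow_natCast] using this
  have hIl : ∀ l : ℕ, IntegrableOn
      (fun y : ℝ => ((Nat.factorial k : ℝ) * a ^ l / (Nat.factorial l : ℝ)) *
        (y ^ ((n:ℝ) - l + 1 - 1) * Real.exp (-(a / y) - ω₂ * y))) (Ioi (0:ℝ)) :=
    fun l => (integrable_aux ha hω₂ l n).const_mul _
  -- Step 3: split the integral
  rw [integral_sub (hIpow.const_mul _)
      (integrable_finset_sum _ fun l _ => hIl l),
    integral_finset_sum _ fun l _ => hIl l]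
  simp_rw [integral_const_mul]
  -- Step 4: evaluate the gamma integral
  have hGamma : ∫ y in Ioi (0:ℝ), y ^ n * Real.exp (-ω₂ * y)
      = ω₂ ^ (-(n : ℝ) - 1) * (Nat.factorial n : ℝ) := by
    have hcongr : ∀ y ∈ Ioi (0:ℝ), y ^ n * Real.exp (-ω₂ * y)
        = y ^ ((n:ℝ) + 1 - 1) * Real.exp (-(ω₂ * y)) := by
      intro y hy
      rw [show (n:ℝ) + 1 - 1 = ((n:ℕ):ℝ) by ring, Real.rpow_natCast, neg_mul]
    rw [setIntegral_congr_fun measurableSet_Ioi hcongr,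
      integral_rpow_mul_exp_neg_mul_Ioi (by positivity) hω₂,
      Real.Gamma_nat_eq_factorial]
    congr 1
    rw [one_div, Real.inv_rpow hω₂.le, ← Real.rpow_neg hω₂.le]
    congr 1
    ring
  rw [hGamma]
  -- Step 5: evaluate each Bessel integral
  have hBess : ∀ l : ℕ,
      ∫ y in Ioi (0:ℝ), y ^ ((n:ℝ) - l + 1 - 1) * Real.exp (-(a / y) - ω₂ * y)
        = (a / ω₂) ^ (((n:ℝ) - l + 1) / 2) *
            (2 * besselK ((n:ℝ) - l + 1) (2 * Real.sqrt (a * ω₂))) :=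
    fun l => integral_besselK_aux ((n:ℝ) - l + 1) a ω₂ ha hω₂
  simp_rw [hBess]
  -- Step 6: final algebra
  rw [mul_sub, Finset.mul_sum]
  congr 1
  · ring
  refine Finset.sum_congr rfl fun l _ => ?_
  have key : a ^ l * (a / ω₂) ^ (((n:ℝ) - l + 1) / 2)
      = ω₂ ^ (-(n:ℝ) - 1) * (a * ω₂) ^ (((n:ℝ) + l + 1) / 2) := by
    rw [Real.div_rpow ha.le hω₂.le, Real.mul_rpow ha.le hω₂.le,
      ← Real.rpow_natCast a l, div_eq_mul_inv, ← Real.rpow_neg hω₂.le]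
    calc a ^ (l:ℝ) * (a ^ (((n:ℝ) - l + 1) / 2) * ω₂ ^ (-(((n:ℝ) - l + 1) / 2)))
        = a ^ ((l:ℝ) + ((n:ℝ) - l + 1) / 2) * ω₂ ^ (-(((n:ℝ) - l + 1) / 2)) := by
          rw [← mul_assoc, ← Real.rpow_add ha]
      _ = a ^ (((n:ℝ) + l + 1) / 2) * ω₂ ^ ((-(n:ℝ) - 1) + ((n:ℝ) + l + 1) / 2) := by
          congr 1 <;> · congr 1; ring
      _ = ω₂ ^ (-(n:ℝ) - 1) * (a ^ (((n:ℝ) + l + 1) / 2) * ω₂ ^ (((n:ℝ) + l + 1) / 2)) := by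
          rw [Real.rpow_add hω₂]
          ring
  linear_combination (2 * (Nat.factorial k : ℝ) / (Nat.factorial l : ℝ) *
    besselK ((n:ℝ) - l + 1) (2 * Real.sqrt (a * ω₂))) * key
end

section
/- For independent exponential random variables X ~ Exp(1/ψ₁) and Y ~ Exp(1/ψ₂) with ψ₁, ψ₂ > 0, the outage probability P(XY ≤ z) satisfies P(XY ≤ z) ~ (z/(ψ₁ψ₂)) ln(ψ₁ψ₂/z) as z → 0⁺, i.e., the ratio tends to 1. -/
open Real Set MeasureTheory ProbabilityTheory Filter Topology
open scoped Interval

noncomputable def Fint (l₁ l₂ z : ℝ) : ℝ :=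
  ∫ x in Ioi (0:ℝ), (1 - exp (-(l₂ * z / x))) * (l₁ * exp (-(l₁ * x)))

lemma g_meas (l₁ l₂ z : ℝ) :
    Measurable fun x : ℝ => (1 - exp (-(l₂ * z / x))) * (l₁ * exp (-(l₁ * x))) := by
  have h1 : Measurable fun x : ℝ => l₂ * z / x := measurable_const.div measurable_id
  have h2 : Measurable fun x : ℝ => l₁ * x := measurable_const.mul measurable_id
  exact (measurable_const.sub (Real.measurable_exp.comp h1.neg)).mul
    (measurable_const.mul (Real.measurable_exp.comp h2.neg))

lemma g_nonneg {l₁ l₂ z : ℝ} (hl₁ : 0 < l₁) (hz : 0 ≤ l₂ * z) {x : ℝ} (hx : 0 < x) :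
    0 ≤ (1 - exp (-(l₂ * z / x))) * (l₁ * exp (-(l₁ * x))) := by
  have h1 : exp (-(l₂ * z / x)) ≤ 1 := exp_le_one_iff.2 (neg_nonpos.2 (by positivity))
  have h2 := exp_pos (-(l₁ * x))
  exact mul_nonneg (by linarith) (by positivity)

lemma g_le_pdf {l₁ l₂ z : ℝ} (hl₁ : 0 < l₁) (hz : 0 ≤ l₂ * z) {x : ℝ} (hx : 0 < x) :
    (1 - exp (-(l₂ * z / x))) * (l₁ * exp (-(l₁ * x))) ≤ l₁ * exp (-(l₁ * x)) := by
  have h1 : 0 < exp (-(l₂ * z / x)) := exp_pos _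
  nlinarith [exp_pos (-(l₁ * x)), mul_pos hl₁ (exp_pos (-(l₁ * x)))]

lemma g_integrableOn {l₁ l₂ z : ℝ} (hl₁ : 0 < l₁) (hl₂ : 0 < l₂) (hz : 0 ≤ z) :
    IntegrableOn (fun x : ℝ => (1 - exp (-(l₂ * z / x))) * (l₁ * exp (-(l₁ * x)))) (Ioi 0) := by
  have hb : IntegrableOn (fun x : ℝ => l₁ * exp (-(l₁ * x))) (Ioi 0) := by
    simpa [neg_mul, IntegrableOn] using ((exp_neg_integrableOn_Ioi 0 hl₁).const_mul l₁)
  refine hb.mono' (g_meas l₁ l₂ z).aestronglyMeasurable ?_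
  refine (ae_restrict_iff' measurableSet_Ioi).2 (ae_of_all _ fun x hx => ?_)
  have hx0 : (0:ℝ) < x := hx
  have hzz : 0 ≤ l₂ * z := by positivity
  rw [Real.norm_eq_abs, abs_of_nonneg (g_nonneg hl₁ hzz hx0)]
  exact g_le_pdf hl₁ hzz hx0

lemma integral_exp_Ioi {l : ℝ} (hl : 0 < l) : ∫ x in Ioi (0:ℝ), exp (-(l * x)) = 1 / l := by
  have h := integral_comp_mul_left_Ioi (fun x => exp (-x)) 0 hl
  simp only [mul_zero, integral_exp_neg_Ioi, neg_zero, exp_zero, smul_eq_mul, mul_one] at h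
  rw [h, one_div]

lemma inv_integrableOn_Ioc {s T : ℝ} (hs : 0 < s) :
    IntegrableOn (fun x : ℝ => x⁻¹) (Ioc s T) := by
  rcases le_or_gt s T with h | h
  · have h0 : ∀ x : ℝ, x ∈ Set.uIcc s T → (id x : ℝ) ≠ 0 := fun x hx => by
      rw [uIcc_of_le h] at hx; exact ne_of_gt (lt_of_lt_of_le hs hx.1)
    have := intervalIntegral.intervalIntegrable_inv h0 continuousOn_id
      (μ := (volume : Measure ℝ))
    simpa [IntervalIntegrable, id] using this.1
  · simp [Ioc_eq_empty (not_lt.2 h.le)]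

lemma integral_inv_Ioc {s T : ℝ} (hs : 0 < s) (hsT : s ≤ T) :
    ∫ x in Ioc s T, x⁻¹ = log T - log s := by
  have h0 : (0:ℝ) ∉ Set.uIcc s T := by
    rw [uIcc_of_le hsT]; exact fun h => absurd h.1 (not_le.2 hs)
  rw [← intervalIntegral.integral_of_le hsT, integral_inv h0,
    log_div (ne_of_gt (lt_of_lt_of_le hs hsT)) (ne_of_gt hs)]

lemma Fint_upper {l₁ l₂ z : ℝ} (hl₁ : 0 < l₁) (hl₂ : 0 < l₂) (hz : 0 < z)
    (hle : l₁ * l₂ * z ≤ 1) :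
    Fint l₁ l₂ z ≤ l₁ * l₂ * z * (log (1 / (l₁ * l₂ * z)) + 2) := by
  set C := l₁ * l₂ * z with hC
  have hC0 : 0 < C := by positivity
  set s := l₂ * z with hs
  set a := 1 / l₁ with ha
  have hs0 : 0 < s := by positivity
  have ha0 : 0 < a := by positivity
  have hsa : s ≤ a := by
    rw [ha, le_div_iff₀ hl₁]
    calc s * l₁ = C := by rw [hC, hs]; ring
      _ ≤ 1 := hle
  set g := fun x : ℝ => (1 - exp (-(l₂ * z / x))) * (l₁ * exp (-(l₁ * x))) with hg
  have hgint : IntegrableOn g (Ioi 0) := g_integrableOn hl₁ hl₂ hz.le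
  have hint1 : IntegrableOn g (Ioc 0 s) := hgint.mono_set Ioc_subset_Ioi_self
  have hint2 : IntegrableOn g (Ioi s) := hgint.mono_set (Ioi_subset_Ioi hs0.le)
  have hsplit : Fint l₁ l₂ z = (∫ x in Ioc 0 s, g x) + ∫ x in Ioi s, g x := by
    rw [Fint, ← Ioc_union_Ioi_eq_Ioi hs0.le,
      setIntegral_union (Ioc_disjoint_Ioi le_rfl) measurableSet_Ioi hint1 hint2]
  -- first piece
  have hIoc : ∫ x in Ioc 0 s, g x ≤ C := by
    have h1 : ∫ x in Ioc 0 s, g x ≤ ∫ x in Ioc 0 s, l₁ := by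
      refine setIntegral_mono_on hint1 (integrableOn_const (by
        rw [Real.volume_Ioc]; exact ENNReal.ofReal_ne_top)) measurableSet_Ioc fun x hx => ?_
      have hx0 : (0:ℝ) < x := hx.1
      have := g_le_pdf hl₁ (by positivity : (0:ℝ) ≤ l₂ * z) hx0
      have h2 : exp (-(l₁ * x)) ≤ 1 := exp_le_one_iff.2 (neg_nonpos.2 (by positivity))
      calc g x ≤ l₁ * exp (-(l₁ * x)) := this
        _ ≤ l₁ * 1 := by nlinarith
        _ = l₁ := mul_one l₁
    have h2 : ∫ x in Ioc 0 s, (l₁:ℝ) = s * l₁ := by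
      rw [setIntegral_const, measureReal_def, Real.volume_Ioc, smul_eq_mul, sub_zero,
        ENNReal.toReal_ofReal hs0.le]
    calc ∫ x in Ioc 0 s, g x ≤ s * l₁ := h2 ▸ h1
      _ = C := by rw [hC, hs]; ring
  -- second piece
  set m := fun x : ℝ => C * (x⁻¹ * exp (-(l₁ * x))) with hm
  have hmint : IntegrableOn m (Ioi s) := by
    have hb : IntegrableOn (fun x : ℝ => (C * s⁻¹) * exp (-(l₁ * x))) (Ioi s) := by
      simpa [neg_mul, IntegrableOn] using ((exp_neg_integrableOn_Ioi s hl₁).const_mul (C * s⁻¹))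
    have hmm : Measurable m := by
      have h2 : Measurable fun x : ℝ => l₁ * x := measurable_const.mul measurable_id
      exact measurable_const.mul (measurable_inv.mul (Real.measurable_exp.comp h2.neg))
    refine hb.mono' hmm.aestronglyMeasurable ?_
    refine (ae_restrict_iff' measurableSet_Ioi).2 (ae_of_all _ fun x hx => ?_)
    have hxs : s < x := hx
    have hx0 : 0 < x := hs0.trans hxs
    rw [Real.norm_eq_abs, abs_of_nonneg (by positivity)]
    have hinv : x⁻¹ ≤ s⁻¹ := by
      rw [inv_le_inv₀ hx0 hs0]; exact hxs.le
    have he := exp_pos (-(l₁ * x))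
    rw [hm]
    calc C * (x⁻¹ * exp (-(l₁ * x))) ≤ C * (s⁻¹ * exp (-(l₁ * x))) := by gcongr
      _ = C * s⁻¹ * exp (-(l₁ * x)) := by ring
  have hgm : ∀ x ∈ Ioi s, g x ≤ m x := by
    intro x hx
    have hxs : s < x := hx
    have hx0 : 0 < x := hs0.trans hxs
    have ht : 1 - exp (-(l₂ * z / x)) ≤ l₂ * z / x := by
      have := add_one_le_exp (-(l₂ * z / x)); linarith
    have h2 : (0:ℝ) < l₁ * exp (-(l₁ * x)) := by positivity
    calc g x ≤ (l₂ * z / x) * (l₁ * exp (-(l₁ * x))) := mul_le_mul_of_nonneg_right ht h2.le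
      _ = m x := by rw [hm, hC]; field_simp
  have hIoi : ∫ x in Ioi s, g x ≤ C * log (a / s) + C := by
    have h0 : ∫ x in Ioi s, g x ≤ ∫ x in Ioi s, m x :=
      setIntegral_mono_on hint2 hmint measurableSet_Ioi hgm
    have hsplit2 : ∫ x in Ioi s, m x = (∫ x in Ioc s a, m x) + ∫ x in Ioi a, m x := by
      rw [← Ioc_union_Ioi_eq_Ioi hsa,
        setIntegral_union (Ioc_disjoint_Ioi le_rfl) measurableSet_Ioi
          (hmint.mono_set Ioc_subset_Ioi_self) (hmint.mono_set (Ioi_subset_Ioi hsa))]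
    have h3 : ∫ x in Ioc s a, m x ≤ C * log (a / s) := by
      have hinvint : IntegrableOn (fun x : ℝ => C * x⁻¹) (Ioc s a) :=
        (inv_integrableOn_Ioc hs0).const_mul C
      have h1 : ∫ x in Ioc s a, m x ≤ ∫ x in Ioc s a, C * x⁻¹ := by
        refine setIntegral_mono_on (hmint.mono_set Ioc_subset_Ioi_self) hinvint
          measurableSet_Ioc fun x hx => ?_
        have hx0 : 0 < x := hs0.trans hx.1
        have he : exp (-(l₁ * x)) ≤ 1 := exp_le_one_iff.2 (neg_nonpos.2 (by positivity))
        have hxi : (0:ℝ) ≤ x⁻¹ := by positivity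
        rw [hm]
        calc C * (x⁻¹ * exp (-(l₁ * x))) ≤ C * (x⁻¹ * 1) := by gcongr
          _ = C * x⁻¹ := by ring
      have h2 : ∫ x in Ioc s a, C * x⁻¹ = C * (log a - log s) := by
        rw [integral_const_mul, integral_inv_Ioc hs0 hsa]
      rw [h2] at h1
      rw [log_div (ne_of_gt ha0) (ne_of_gt hs0)]
      exact h1
    have h4 : ∫ x in Ioi a, m x ≤ C := by
      have hbint : IntegrableOn (fun x : ℝ => C * (l₁ * exp (-(l₁ * x)))) (Ioi 0) := by
        simpa [neg_mul, mul_assoc, IntegrableOn] using ((exp_neg_integrableOn_Ioi 0 hl₁).const_mul (C * l₁))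
      have h1 : ∫ x in Ioi a, m x ≤ ∫ x in Ioi a, C * (l₁ * exp (-(l₁ * x))) := by
        refine setIntegral_mono_on (hmint.mono_set (Ioi_subset_Ioi hsa))
          (hbint.mono_set (Ioi_subset_Ioi ha0.le)) measurableSet_Ioi fun x hx => ?_
        have hxa : a < x := hx
        have hx0 : 0 < x := ha0.trans hxa
        have hinv : x⁻¹ ≤ l₁ := by
          rw [ha] at hxa
          calc x⁻¹ ≤ (1/l₁)⁻¹ := by rw [inv_le_inv₀ hx0 (by positivity)]; exact hxa.le
            _ = l₁ := by field_simp
        have he := exp_pos (-(l₁ * x))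
        rw [hm]
        exact mul_le_mul_of_nonneg_left (mul_le_mul_of_nonneg_right hinv he.le) hC0.le
      have h2 : ∫ x in Ioi a, C * (l₁ * exp (-(l₁ * x))) ≤
          ∫ x in Ioi (0:ℝ), C * (l₁ * exp (-(l₁ * x))) := by
        refine setIntegral_mono_set hbint ?_ (HasSubset.Subset.eventuallyLE (Ioi_subset_Ioi ha0.le))
        refine (ae_restrict_iff' measurableSet_Ioi).2 (ae_of_all _ fun x _ => ?_)
        positivity
      have h3 : ∫ x in Ioi (0:ℝ), C * (l₁ * exp (-(l₁ * x))) = C := by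
        rw [integral_const_mul, integral_const_mul, integral_exp_Ioi hl₁]
        field_simp
      linarith
    linarith [hsplit2 ▸ h0]
  have hlog : log (a / s) = log (1 / C) := by
    congr 1
    rw [ha, hs, hC]
    field_simp
  rw [hsplit]
  rw [hlog] at hIoi
  linarith

lemma measure_eq {l₁ l₂ : ℝ} (hl₁ : 0 < l₁) (hl₂ : 0 < l₂) {Ω : Type*} [MeasureSpace Ω]
    [IsProbabilityMeasure (ℙ : Measure Ω)] {X Y : Ω → ℝ} (hX : Measurable X) (hY : Measurable Y)
    (hXlaw : Measure.map X ℙ = expMeasure l₁) (hYlaw : Measure.map Y ℙ = expMeasure l₂)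
    (hind : IndepFun X Y ℙ) {z : ℝ} (hz : 0 < z) :
    (ℙ {ω | X ω * Y ω ≤ z}).toReal = Fint l₁ l₂ z := by
  have hmap : Measure.map (fun ω => (X ω, Y ω)) ℙ = (expMeasure l₁).prod (expMeasure l₂) := by
    rw [← hXlaw, ← hYlaw]
    exact (indepFun_iff_map_prod_eq_prod_map_map hX.aemeasurable hY.aemeasurable).mp hind
  have hSm : MeasurableSet {p : ℝ × ℝ | p.1 * p.2 ≤ z} :=
    measurableSet_le (measurable_fst.mul measurable_snd) measurable_const
  haveI := isProbabilityMeasure_expMeasure hl₁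
  haveI := isProbabilityMeasure_expMeasure hl₂
  have h1 : ℙ {ω | X ω * Y ω ≤ z}
      = (expMeasure l₁).prod (expMeasure l₂) {p : ℝ × ℝ | p.1 * p.2 ≤ z} := by
    rw [← hmap, Measure.map_apply (hX.prodMk hY) hSm]; rfl
  have hpdf : Measurable (exponentialPDF l₁) := (measurable_exponentialPDFReal l₁).ennreal_ofReal
  have hsec : Measurable (fun x : ℝ =>
      expMeasure l₂ (Prod.mk x ⁻¹' {p : ℝ × ℝ | p.1 * p.2 ≤ z})) :=
    measurable_measure_prodMk_left hSm
  have h2 : (expMeasure l₁).prod (expMeasure l₂) {p : ℝ × ℝ | p.1 * p.2 ≤ z}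
      = ∫⁻ x, (fun x => expMeasure l₂ (Prod.mk x ⁻¹' {p : ℝ × ℝ | p.1 * p.2 ≤ z})) x
          * exponentialPDF l₁ x ∂(volume : Measure ℝ) := by
    rw [Measure.prod_apply hSm]
    show (∫⁻ x, _ ∂((volume : Measure ℝ).withDensity (exponentialPDF l₁))) = _
    rw [lintegral_withDensity_eq_lintegral_mul _ hpdf hsec]
    exact lintegral_congr fun x => mul_comm _ _
  set g : ℝ → ℝ := fun x => (1 - exp (-(l₂ * z / x))) * (l₁ * exp (-(l₁ * x))) with hg
  have key : ∀ x ∈ Ioi (0:ℝ),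
      expMeasure l₂ (Prod.mk x ⁻¹' {p : ℝ × ℝ | p.1 * p.2 ≤ z}) * exponentialPDF l₁ x
        = ENNReal.ofReal (g x) := by
    intro x hx
    have hx0 : 0 < x := hx
    have hpre : Prod.mk x ⁻¹' {p : ℝ × ℝ | p.1 * p.2 ≤ z} = Iic (z / x) := by
      ext y; simp [le_div_iff₀ hx0, mul_comm]
    have hzx : 0 ≤ z / x := le_of_lt (div_pos hz hx0)
    have hνIic : expMeasure l₂ (Iic (z / x)) = ENNReal.ofReal (1 - exp (-(l₂ * z / x))) := by
      show ((volume : Measure ℝ).withDensity (exponentialPDF l₂)) (Iic (z / x)) = _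
      rw [withDensity_apply _ measurableSet_Iic, lintegral_exponentialPDF_eq_antiDeriv hl₂,
        if_pos hzx, mul_div_assoc]
    rw [hpre, hνIic, exponentialPDF_of_nonneg hx0.le, hg]
    rw [← ENNReal.ofReal_mul]
    have : l₂ * z / x ≥ 0 := by positivity
    nlinarith [exp_le_one_iff.2 (neg_nonpos_of_nonneg this), exp_pos (-(l₂ * z / x))]
  have h3 : (∫⁻ x, (fun x => expMeasure l₂ (Prod.mk x ⁻¹' {p : ℝ × ℝ | p.1 * p.2 ≤ z})) x
      * exponentialPDF l₁ x ∂(volume : Measure ℝ))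
      = ∫⁻ x in Ioi (0:ℝ), ENNReal.ofReal (g x) ∂(volume : Measure ℝ) := by
    rw [← lintegral_add_compl _ (measurableSet_Ioi (a := (0:ℝ)))]
    have hIic : (∫⁻ x in (Ioi (0:ℝ))ᶜ, (fun x => expMeasure l₂
        (Prod.mk x ⁻¹' {p : ℝ × ℝ | p.1 * p.2 ≤ z})) x * exponentialPDF l₁ x ∂volume) = 0 := by
      rw [compl_Ioi]
      rw [setLIntegral_congr (f := fun x => expMeasure l₂
        (Prod.mk x ⁻¹' {p : ℝ × ℝ | p.1 * p.2 ≤ z}) * exponentialPDF l₁ x) Iio_ae_eq_Iic.symm]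
      rw [setLIntegral_congr_fun measurableSet_Iio
        (fun x (hx : x < 0) => by rw [exponentialPDF_of_neg hx, mul_zero])]
      simp
    rw [hIic, add_zero]
    exact setLIntegral_congr_fun measurableSet_Ioi key
  have hgm : AEStronglyMeasurable g ((volume : Measure ℝ).restrict (Ioi 0)) := by
    apply ContinuousOn.aestronglyMeasurable _ measurableSet_Ioi
    apply ContinuousOn.mul
    · exact (continuousOn_const.sub (((continuousOn_const.div continuousOn_id
        (fun x hx => ne_of_gt hx)).neg).rexp))
    · exact continuousOn_const.mul (Continuous.continuousOn (by continuity))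
  have hgnn : 0 ≤ᵐ[(volume : Measure ℝ).restrict (Ioi 0)] g := by
    refine (ae_restrict_iff' measurableSet_Ioi).2 (ae_of_all _ (fun x hx => ?_))
    have hx0 : (0:ℝ) < x := hx
    have h1 : exp (-(l₂ * z / x)) ≤ 1 := exp_le_one_iff.2 (neg_nonpos.2 (by positivity))
    have h2 := exp_pos (-(l₁ * x))
    show (0:ℝ) ≤ g x
    exact mul_nonneg (by linarith) (by positivity)
  have h4 : Fint l₁ l₂ z
      = (∫⁻ x in Ioi (0:ℝ), ENNReal.ofReal (g x) ∂(volume : Measure ℝ)).toReal := by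
    rw [Fint, integral_eq_lintegral_of_nonneg_ae hgnn hgm]
  rw [h1, h2, h3, h4]

lemma Fint_lower {l₁ l₂ z s T : ℝ} (hl₁ : 0 < l₁) (hl₂ : 0 < l₂) (hz : 0 < z)
    (hs0 : 0 < s) (hsT : s ≤ T) :
    l₁ * l₂ * z * (exp (-(l₂ * z / s) - l₁ * T) * (log T - log s)) ≤ Fint l₁ l₂ z := by
  set C := l₁ * l₂ * z with hC
  have hC0 : 0 < C := by positivity
  set E := exp (-(l₂ * z / s) - l₁ * T) with hE
  have hE0 : 0 < E := exp_pos _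
  set g := fun x : ℝ => (1 - exp (-(l₂ * z / x))) * (l₁ * exp (-(l₁ * x))) with hg
  have hgint : IntegrableOn g (Ioi 0) := g_integrableOn hl₁ hl₂ hz.le
  set m := fun x : ℝ => C * E * x⁻¹ with hm
  have hmint : IntegrableOn m (Ioc s T) := (inv_integrableOn_Ioc hs0).const_mul (C * E)
  have hsub : Ioc s T ⊆ Ioi 0 := fun x hx => hs0.trans hx.1
  have key : ∀ x ∈ Ioc s T, m x ≤ g x := by
    intro x hx
    have hx0 : 0 < x := hs0.trans hx.1
    set t := l₂ * z / x with hts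
    have ht0 : 0 < t := by positivity
    have h1 : t * exp (-t) ≤ 1 - exp (-t) := by
      have h := mul_le_mul_of_nonneg_right (add_one_le_exp t) (exp_pos (-t)).le
      rw [← exp_add, add_neg_cancel, exp_zero] at h
      nlinarith
    have h2 : exp (-(l₂ * z / s)) ≤ exp (-t) := by
      apply exp_le_exp.2
      have ht2 : t ≤ l₂ * z / s := by
        rw [hts]
        apply div_le_div_of_nonneg_left (by positivity) hs0 hx.1.le
      linarith
    have h3 : exp (-(l₁ * T)) ≤ exp (-(l₁ * x)) := by
      apply exp_le_exp.2
      nlinarith [hx.2]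
    have hEeq : E = exp (-(l₂ * z / s)) * exp (-(l₁ * T)) := by
      rw [hE, ← exp_add]; ring_nf
    have step1 : m x ≤ (t * exp (-t)) * (l₁ * exp (-(l₁ * x))) := by
      have hmx : m x = (t * exp (-(l₂ * z / s))) * (l₁ * exp (-(l₁ * T))) := by
        rw [hm, hEeq, hts, hC]; field_simp
      rw [hmx]
      exact mul_le_mul (mul_le_mul_of_nonneg_left h2 ht0.le)
        (mul_le_mul_of_nonneg_left h3 hl₁.le) (by positivity) (by positivity)
    have step2 : (t * exp (-t)) * (l₁ * exp (-(l₁ * x))) ≤ g x := by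
      rw [hg]
      exact mul_le_mul_of_nonneg_right h1 (by positivity)
    linarith
  have hlow : ∫ x in Ioc s T, m x ≤ ∫ x in Ioc s T, g x :=
    setIntegral_mono_on hmint (hgint.mono_set hsub) measurableSet_Ioc key
  have hmval : ∫ x in Ioc s T, m x = C * E * (log T - log s) := by
    rw [hm, integral_const_mul, integral_inv_Ioc hs0 hsT]
  have hfin : ∫ x in Ioc s T, g x ≤ Fint l₁ l₂ z := by
    rw [Fint]
    refine setIntegral_mono_set hgint ?_ (HasSubset.Subset.eventuallyLE hsub)
    refine (ae_restrict_iff' measurableSet_Ioi).2 (ae_of_all _ fun x hx => ?_)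
    show (0:ℝ) ≤ g x
    exact g_nonneg hl₁ (by positivity) hx
  calc C * (E * (log T - log s)) = C * E * (log T - log s) := by ring
    _ = ∫ x in Ioc s T, m x := hmval.symm
    _ ≤ ∫ x in Ioc s T, g x := hlow
    _ ≤ Fint l₁ l₂ z := hfin

lemma sqrt_tendsto_atTop : Tendsto Real.sqrt atTop atTop := by
  refine Tendsto.congr' ?_ (tendsto_rpow_atTop (by norm_num : (0:ℝ) < 1/2))
  filter_upwards [eventually_ge_atTop (0:ℝ)] with x hx
  exact (Real.sqrt_eq_rpow x).symm

lemma Fint_tendsto {l₁ l₂ : ℝ} (hl₁ : 0 < l₁) (hl₂ : 0 < l₂) :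
    Tendsto (fun z => Fint l₁ l₂ z / (l₁ * l₂ * z * log (1 / (l₁ * l₂ * z))))
      (𝓝[>] 0) (𝓝 1) := by
  set L : ℝ → ℝ := fun z => log (1 / (l₁ * l₂ * z)) with hLdef
  have hL : Tendsto L (𝓝[>] 0) atTop := by
    have h1 : Tendsto (fun z : ℝ => -log (l₁ * l₂) + -log z) (𝓝[>] 0) atTop :=
      tendsto_atTop_add_const_left _ _
        (tendsto_neg_atBot_atTop.comp tendsto_log_nhdsGT_zero)
    refine h1.congr' ?_
    filter_upwards [self_mem_nhdsWithin] with z (hz : 0 < z)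
    show -log (l₁ * l₂) + -log z = L z
    rw [hLdef]
    simp only [one_div, log_inv, log_mul (by positivity : l₁ * l₂ ≠ 0) (ne_of_gt hz)]
    ring
  have hCL : Tendsto (fun z => l₁ * l₂ * z * L z) (𝓝[>] 0) (𝓝 0) := by
    have h1 : Tendsto (fun z : ℝ => l₁ * l₂ * (z * (-log (l₁ * l₂)) - log z * z))
        (𝓝[>] 0) (𝓝 0) := by
      have ha : Tendsto (fun z : ℝ => z * (-log (l₁ * l₂))) (𝓝[>] 0) (𝓝 0) := by
        have h := (continuous_mul_right (-log (l₁ * l₂))).tendsto (0:ℝ)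
        simp only [id, zero_mul] at h
        exact h.mono_left nhdsWithin_le_nhds
      have hb : Tendsto (fun z : ℝ => log z * z) (𝓝[>] 0) (𝓝 0) := by
        have h := tendsto_log_mul_rpow_nhdsGT_zero (r := 1) one_pos
        simpa using h
      have h := (ha.sub hb).const_mul (l₁ * l₂)
      simpa using h
    refine h1.congr' ?_
    filter_upwards [self_mem_nhdsWithin] with z (hz : 0 < z)
    show l₁ * l₂ * (z * (-log (l₁ * l₂)) - log z * z) = l₁ * l₂ * z * L z
    rw [hLdef]
    simp only [one_div, log_inv, log_mul (by positivity : l₁ * l₂ ≠ 0) (ne_of_gt hz)]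
    ring
  have hub : Tendsto (fun z => 1 + 2 / L z) (𝓝[>] 0) (𝓝 1) := by
    have h := (tendsto_const_nhds (α := ℝ) (x := (1:ℝ)) (f := 𝓝[>] (0:ℝ))).add
      ((tendsto_const_nhds (x := (2:ℝ))).div_atTop hL)
    simpa using h
  have hlb : Tendsto (fun z => exp (-(2 / Real.sqrt (L z))) * (1 - log (L z) / L z))
      (𝓝[>] 0) (𝓝 1) := by
    have hφ : Tendsto (fun t : ℝ => exp (-(2 / Real.sqrt t)) * (1 - log t / t))
        atTop (𝓝 1) := by
      have h1 : Tendsto (fun t : ℝ => exp (-(2 / Real.sqrt t))) atTop (𝓝 1) := by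
        have h2 : Tendsto (fun t : ℝ => -(2 / Real.sqrt t)) atTop (𝓝 0) := by
          have h := (tendsto_const_nhds (x := (2:ℝ))).div_atTop sqrt_tendsto_atTop
          simpa using h.neg
        have h := (Real.continuous_exp.tendsto 0).comp h2
        simpa [Function.comp_def] using h
      have h3 : Tendsto (fun t : ℝ => 1 - log t / t) atTop (𝓝 1) := by
        have h := (tendsto_const_nhds (α := ℝ) (x := (1:ℝ))).sub
          (Real.isLittleO_log_id_atTop.tendsto_div_nhds_zero)
        simpa using h
      have h := h1.mul h3
      simpa using h
    exact hφ.comp hL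
  refine tendsto_of_tendsto_of_tendsto_of_le_of_le' hlb hub ?_ ?_
  · -- lower bound
    filter_upwards [self_mem_nhdsWithin, hL.eventually_ge_atTop 1,
      hCL.eventually (Iio_mem_nhds one_pos)] with z hz' hL1 hCL1
    have hz : 0 < z := hz'
    have hCL1' : l₁ * l₂ * z * L z < 1 := hCL1
    have hLz0 : 0 < L z := lt_of_lt_of_le one_pos hL1
    have hC0 : 0 < l₁ * l₂ * z := by positivity
    have hD0 : 0 < l₁ * l₂ * z * L z := by positivity
    have hsq0 : 0 < Real.sqrt (L z) := Real.sqrt_pos.2 hLz0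
    have hsqsq : Real.sqrt (L z) * Real.sqrt (L z) = L z := Real.mul_self_sqrt hLz0.le
    set q := Real.sqrt (L z) with hqdef
    have hs0 : 0 < l₂ * z * q := by positivity
    have hsT : l₂ * z * q ≤ 1 / (l₁ * q) := by
      rw [le_div_iff₀ (by positivity)]
      calc l₂ * z * q * (l₁ * q) = l₁ * l₂ * z * L z := by rw [← hsqsq]; ring
        _ ≤ 1 := hCL1'.le
    have hkey := Fint_lower (s := l₂ * z * q) (T := 1 / (l₁ * q)) hl₁ hl₂ hz hs0 hsT
    have e1 : l₂ * z / (l₂ * z * q) = 1 / q := by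
      rw [one_div]
      field_simp
    have e2 : l₁ * (1 / (l₁ * q)) = 1 / q := by field_simp
    have e3 : log (1 / (l₁ * q)) - log (l₂ * z * q) = L z - log (L z) := by
      have hlogT : log (1 / (l₁ * q)) = -(log l₁ + log q) := by
        rw [one_div, log_inv, log_mul (ne_of_gt hl₁) (ne_of_gt hsq0)]
      have hlogs : log (l₂ * z * q) = log l₂ + log z + log q := by
        rw [log_mul (by positivity) (ne_of_gt hsq0), log_mul (ne_of_gt hl₂) (ne_of_gt hz)]
      have hlogq : log q = log (L z) / 2 := by rw [hqdef]; exact Real.log_sqrt hLz0.le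
      have hLz : L z = -(log l₁ + log l₂ + log z) := by
        show log (1 / (l₁ * l₂ * z)) = _
        rw [one_div, log_inv, log_mul (by positivity : l₁ * l₂ ≠ 0) (ne_of_gt hz),
          log_mul (ne_of_gt hl₁) (ne_of_gt hl₂)]
      rw [hlogT, hlogs]
      linarith [hlogq, hLz]
    have hstep : exp (-(2 / q)) * (1 - log (L z) / L z) * (l₁ * l₂ * z * L z)
        ≤ Fint l₁ l₂ z := by
      have heq : exp (-(2 / q)) * (1 - log (L z) / L z) * (l₁ * l₂ * z * L z)
          = l₁ * l₂ * z * (exp (-(l₂ * z / (l₂ * z * q)) - l₁ * (1 / (l₁ * q)))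
            * (log (1 / (l₁ * q)) - log (l₂ * z * q))) := by
        rw [e1, e2, e3]
        have h24 : -(1 / q) - 1 / q = -(2 / q) := by ring
        rw [h24]
        field_simp
      rw [heq]
      exact hkey
    exact (le_div_iff₀ hD0).2 hstep
  · -- upper bound
    filter_upwards [self_mem_nhdsWithin, hL.eventually_ge_atTop 1,
      hCL.eventually (Iio_mem_nhds one_pos)] with z hz' hL1 hCL1
    have hz : 0 < z := hz'
    have hCL1' : l₁ * l₂ * z * L z < 1 := hCL1
    have hLz0 : 0 < L z := lt_of_lt_of_le one_pos hL1
    have hC0 : 0 < l₁ * l₂ * z := by positivity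
    have hD0 : 0 < l₁ * l₂ * z * L z := by positivity
    have hle : l₁ * l₂ * z ≤ 1 := by
      have h := le_mul_of_one_le_right hC0.le hL1
      linarith
    have hup := Fint_upper hl₁ hl₂ hz hle
    rw [div_le_iff₀ hD0]
    calc Fint l₁ l₂ z ≤ l₁ * l₂ * z * (L z + 2) := hup
      _ = (1 + 2 / L z) * (l₁ * l₂ * z * L z) := by field_simp

/-- For independent `X ~ Exp(1/ψ₁)`, `Y ~ Exp(1/ψ₂)`,
`P(XY ≤ z) ~ (z/(ψ₁ψ₂)) ln(ψ₁ψ₂/z)` as `z → 0⁺`. -/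
theorem outage_asymptotics (Ω : Type*) [MeasureSpace Ω] [IsProbabilityMeasure (ℙ : Measure Ω)]
    (X Y : Ω → ℝ) (hX : Measurable X) (hY : Measurable Y)
    (ψ₁ ψ₂ : ℝ) (hψ₁ : 0 < ψ₁) (hψ₂ : 0 < ψ₂)
    (hXlaw : Measure.map X ℙ = expMeasure (1 / ψ₁))
    (hYlaw : Measure.map Y ℙ = expMeasure (1 / ψ₂))
    (hind : IndepFun X Y ℙ) :
    Tendsto (fun z : ℝ =>
        (ℙ {ω | X ω * Y ω ≤ z}).toReal / ((z / (ψ₁ * ψ₂)) * Real.log (ψ₁ * ψ₂ / z)))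
      (𝓝[>] (0:ℝ)) (𝓝 1) := by
  have hl₁ : 0 < 1 / ψ₁ := by positivity
  have hl₂ : 0 < 1 / ψ₂ := by positivity
  refine Tendsto.congr' ?_ (Fint_tendsto hl₁ hl₂)
  filter_upwards [self_mem_nhdsWithin] with z (hz : 0 < z)
  have hm := measure_eq hl₁ hl₂ hX hY hXlaw hYlaw hind hz
  have hden1 : 1 / ψ₁ * (1 / ψ₂) * z = z / (ψ₁ * ψ₂) := by field_simp
  rw [hm, hden1, one_div_div]
end

section
/- For ω > 0, μ ∈ [0,1), x₀ ≥ 0, and nonnegative integer t, the t-th moment of the noncentral distribution with density f(x) = ω e^{-ω(x+μ x₀)} I₀(2ω√(μ x₀ x)) satisfies ∫₀^∞ x^t f(x) dx = Σ_{k=0}^∞ (ω^{2k+1} μ^k / (k!)²) x₀^k e^{-ω μ x₀} (k+t)! / ω^{k+t+1}. -/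
open Real Set MeasureTheory

lemma cos_int_odd (n : ℕ) : ∫ θ in (0:ℝ)..π, Real.cos θ ^ (2*n+1) = 0 := by
  have h : ∫ θ in (0:ℝ)..π, Real.cos (π - θ) ^ (2*n+1) =
      ∫ θ in (0:ℝ)..π, Real.cos θ ^ (2*n+1) := by
    have := intervalIntegral.integral_comp_sub_left (a := (0:ℝ)) (b := π)
      (fun x => Real.cos x ^ (2*n+1)) π
    simpa using this
  have h2 : ∫ θ in (0:ℝ)..π, Real.cos (π - θ) ^ (2*n+1) =
      - ∫ θ in (0:ℝ)..π, Real.cos θ ^ (2*n+1) := by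
    rw [← intervalIntegral.integral_neg]
    refine intervalIntegral.integral_congr fun x _ => ?_
    rw [Real.cos_pi_sub]
    rw [Odd.neg_pow ⟨n, by ring⟩]
  linarith [h, h2]

lemma prod_wallis (n : ℕ) :
    ∏ i ∈ Finset.range n, ((2*(i:ℝ)+1)/(2*i+2)) =
      (Nat.factorial (2*n) : ℝ) / (4^n * (Nat.factorial n : ℝ)^2) := by
  induction n with
  | zero => simp
  | succ k ih =>
    rw [Finset.prod_range_succ, ih]
    have e1 : (Nat.factorial (2*(k+1)) : ℝ) = (2*k+2)*(2*k+1)*(Nat.factorial (2*k)) := by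
      rw [show 2*(k+1) = (2*k+1)+1 by ring, Nat.factorial_succ, Nat.factorial_succ]
      push_cast; ring
    have e2 : (Nat.factorial (k+1) : ℝ) = (k+1)*(Nat.factorial k) := by
      rw [Nat.factorial_succ]; push_cast; ring
    rw [e1, e2]
    have hk : (Nat.factorial k : ℝ) ≠ 0 := Nat.cast_ne_zero.2 (Nat.factorial_ne_zero k)
    have h4 : (4:ℝ)^k ≠ 0 := by positivity
    have hk1 : ((k:ℝ)+1) ≠ 0 := by positivity
    have hk22 : ((2:ℝ)*k+2) ≠ 0 := by positivity
    field_simp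
    ring

lemma cos_int_even (n : ℕ) : ∫ θ in (0:ℝ)..π, Real.cos θ ^ (2*n) =
    π * ((Nat.factorial (2*n) : ℝ) / (4^n * (Nat.factorial n : ℝ)^2)) := by
  have key : ∫ θ in (0:ℝ)..π, Real.cos θ ^ (2*n) = ∫ θ in (0:ℝ)..π, Real.sin θ ^ (2*n) := by
    have L : IntervalIntegrable (fun x => Real.cos x ^ (2*n)) volume 0 (π/2) :=
      (Real.continuous_cos.pow _).intervalIntegrable _ _
    have R : IntervalIntegrable (fun x => Real.cos x ^ (2*n)) volume (π/2) π :=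
      (Real.continuous_cos.pow _).intervalIntegrable _ _
    rw [← intervalIntegral.integral_add_adjacent_intervals L R]
    have h2 : ∫ θ in (π/2:ℝ)..π, Real.cos θ ^ (2*n) = ∫ θ in (0:ℝ)..(π/2), Real.cos θ ^ (2*n) := by
      have := intervalIntegral.integral_comp_sub_left (a := (π/2:ℝ)) (b := π)
        (fun x => Real.cos x ^ (2*n)) π
      rw [show π - π = (0:ℝ) by ring, show π - π/2 = π/2 by ring] at this
      rw [← this]
      refine intervalIntegral.integral_congr fun x _ => ?_
      rw [Real.cos_pi_sub, Even.neg_pow ⟨n, by ring⟩]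
    rw [h2, ← two_mul, EulerSine.integral_cos_pow_eq]
    ring
  rw [key, integral_sin_pow_even, prod_wallis]

lemma besselI0_hasSum (z : ℝ) :
    HasSum (fun k : ℕ => z ^ (2*k) / (4^k * (Nat.factorial k : ℝ)^2)) (besselI0 z) := by
  set F : ℕ → ℝ → ℝ := fun n θ => (z * Real.cos θ) ^ n / (Nat.factorial n : ℝ) with hF
  have hFint : ∀ n, Integrable (F n) (volume.restrict (Ioc (0:ℝ) π)) := fun n =>
    (((continuous_const.mul Real.continuous_cos).pow n).div_const _).integrableOn_Ioc
  have hFnorm : ∀ n, ∫ θ in Ioc (0:ℝ) π, ‖F n θ‖ ≤ (|z|^n / (Nat.factorial n : ℝ)) * π := by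
    intro n
    have hb : ∀ θ ∈ Ioc (0:ℝ) π, ‖F n θ‖ ≤ |z|^n / (Nat.factorial n : ℝ) := by
      intro θ _
      rw [hF]
      simp only [Real.norm_eq_abs, abs_div, abs_pow, abs_mul, Nat.abs_cast]
      gcongr (?_ ^ n / _)
      exact mul_le_of_le_one_right (abs_nonneg z) (Real.abs_cos_le_one θ)
    calc ∫ θ in Ioc (0:ℝ) π, ‖F n θ‖
        ≤ ∫ _ in Ioc (0:ℝ) π, (|z|^n / (Nat.factorial n : ℝ)) := by
          refine setIntegral_mono_on (hFint n).norm (integrableOn_const ?_)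
            measurableSet_Ioc hb
          rw [Real.volume_Ioc]; exact ENNReal.ofReal_ne_top
      _ = (|z|^n / (Nat.factorial n : ℝ)) * π := by
          rw [setIntegral_const, Real.volume_real_Ioc_of_le Real.pi_pos.le, smul_eq_mul, mul_comm,
            sub_zero]
  have hsum : Summable fun n => ∫ θ in Ioc (0:ℝ) π, ‖F n θ‖ :=
    Summable.of_nonneg_of_le (fun n => integral_nonneg fun θ => norm_nonneg _)
      hFnorm ((Real.summable_pow_div_factorial |z|).mul_right π)
  have swap := hasSum_integral_of_summable_integral_norm hFint hsum
  have hexp : ∀ θ : ℝ, ∑' n, F n θ = Real.exp (z * Real.cos θ) := by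
    intro θ
    rw [Real.exp_eq_exp_ℝ, NormedSpace.exp_eq_tsum_div]
  simp only [hexp] at swap
  have hIoc : ∫ θ in Ioc (0:ℝ) π, Real.exp (z * Real.cos θ) = π * besselI0 z := by
    rw [besselI0, ← intervalIntegral.integral_of_le Real.pi_pos.le]
    field_simp
  rw [hIoc] at swap
  have hterm : ∀ n, ∫ θ in Ioc (0:ℝ) π, F n θ =
      z^n / (Nat.factorial n : ℝ) * ∫ θ in (0:ℝ)..π, Real.cos θ ^ n := by
    intro n
    rw [intervalIntegral.integral_of_le Real.pi_pos.le, ← MeasureTheory.integral_const_mul]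
    refine setIntegral_congr_fun measurableSet_Ioc fun θ _ => ?_
    show (z * Real.cos θ) ^ n / _ = _
    rw [mul_pow]; ring
  set g : ℕ → ℝ := fun n => (z^n / (Nat.factorial n : ℝ) * ∫ θ in (0:ℝ)..π, Real.cos θ ^ n) / π
    with hg
  have hgsum : HasSum g (besselI0 z) := by
    have := swap.div_const π
    rw [mul_div_cancel_left₀ _ (ne_of_gt Real.pi_pos)] at this
    simp only [hterm] at this
    exact this
  have hodd : ∀ x ∉ Set.range (fun k : ℕ => 2 * k), g x = 0 := by
    intro x hx
    have hxo : Odd x := by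
      rcases Nat.even_or_odd x with he | ho
      · exact absurd (by obtain ⟨m, hm⟩ := he; exact ⟨m, by simp only []; omega⟩) hx
      · exact ho
    obtain ⟨m, rfl⟩ := hxo
    rw [hg]
    simp only [cos_int_odd m]
    simp
  have h2inj : Function.Injective (fun k : ℕ => 2 * k) := fun a b h => by simpa using h
  have := (Function.Injective.hasSum_iff h2inj hodd).2 hgsum
  refine HasSum.congr_fun this fun k => ?_
  show _ = g (2 * k)
  rw [hg]
  simp only [cos_int_even k]
  have h1 : (Nat.factorial (2*k) : ℝ) ≠ 0 := Nat.cast_ne_zero.2 (Nat.factorial_ne_zero _)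
  have h2 : (Nat.factorial k : ℝ) ≠ 0 := Nat.cast_ne_zero.2 (Nat.factorial_ne_zero _)
  have h3 : (4:ℝ)^k ≠ 0 := by positivity
  field_simp


lemma integrableOn_pow_mul_exp (m : ℕ) {ω : ℝ} (hω : 0 < ω) :
    IntegrableOn (fun x : ℝ => x ^ m * Real.exp (-(ω * x))) (Ioi (0:ℝ)) := by
  have h := integrableOn_rpow_mul_exp_neg_mul_rpow
    (lt_of_lt_of_le (by norm_num) (Nat.cast_nonneg (α := ℝ) m)) one_pos hω
  refine h.congr_fun (fun x hx => ?_) measurableSet_Ioi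
  simp only [Real.rpow_one, Real.rpow_natCast, neg_mul]

lemma integral_pow_mul_exp (m : ℕ) {ω : ℝ} (hω : 0 < ω) :
    ∫ x in Ioi (0:ℝ), x ^ m * Real.exp (-(ω * x)) =
      (Nat.factorial m : ℝ) / ω ^ (m+1) := by
  have h := Real.integral_rpow_mul_exp_neg_mul_Ioi
    (a := (m:ℝ)+1) (by positivity) hω
  rw [add_sub_cancel_right] at h
  have h2 : ∫ x in Ioi (0:ℝ), x ^ m * Real.exp (-(ω * x)) =
      ∫ x in Ioi (0:ℝ), x ^ (m:ℝ) * Real.exp (-(ω * x)) := by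
    refine setIntegral_congr_fun measurableSet_Ioi fun x hx => ?_
    rw [Real.rpow_natCast]
  rw [h2, h, Real.Gamma_nat_eq_factorial]
  rw [show ((m:ℝ)+1) = ((m+1 : ℕ) : ℝ) by push_cast; ring, Real.rpow_natCast]
  rw [one_div, inv_pow, div_eq_mul_inv, mul_comm]

lemma factorial_add_le (k t : ℕ) :
    (Nat.factorial (k + t)) ≤ 2 ^ (k + t) * Nat.factorial t * Nat.factorial k := by
  have h1 : (k+t).choose t * Nat.factorial t * Nat.factorial (k + t - t) =
      Nat.factorial (k+t) := Nat.choose_mul_factorial_mul_factorial (Nat.le_add_left t k)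
  rw [Nat.add_sub_cancel] at h1
  have h2 : (k+t).choose t ≤ 2 ^ (k+t) := by
    calc (k+t).choose t ≤ ∑ m ∈ Finset.range (k+t+1), (k+t).choose m :=
          Finset.single_le_sum (fun _ _ => Nat.zero_le _)
            (Finset.mem_range.2 (by omega))
      _ = 2 ^ (k+t) := Nat.sum_range_choose _
  calc Nat.factorial (k+t) = (k+t).choose t * Nat.factorial t * Nat.factorial k := h1.symm
    _ ≤ 2 ^ (k+t) * Nat.factorial t * Nat.factorial k := by
        exact Nat.mul_le_mul_right _ (Nat.mul_le_mul_right _ h2)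

/-- The `t`-th moment of the noncentral density:
`∫₀^∞ x^t f(x) dx = ∑_k (ω^{2k+1}μ^k/(k!)²) x₀^k e^{-ωμx₀} (k+t)!/ω^{k+t+1}`. -/
theorem noncentral_moment (ω μ x₀ : ℝ) (hω : 0 < ω) (hμ : μ ∈ Ico (0:ℝ) 1) (hx₀ : 0 ≤ x₀)
    (t : ℕ) :
    ∫ x in Ioi (0:ℝ),
        x ^ t * (ω * Real.exp (-(ω * (x + μ * x₀))) * besselI0 (2 * ω * Real.sqrt (μ * x₀ * x))) =
      ∑' k : ℕ, (ω ^ (2 * k + 1) * μ ^ k / (Nat.factorial k : ℝ) ^ 2) * x₀ ^ k *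
        Real.exp (-(ω * μ * x₀)) * (Nat.factorial (k + t) : ℝ) / ω ^ (k + t + 1) := by
  obtain ⟨hμ0, hμ1⟩ := hμ
  set G : ℕ → ℝ → ℝ := fun k x =>
    (ω ^ (2*k+1) * μ ^ k / (Nat.factorial k : ℝ)^2) * x₀^k * Real.exp (-(ω*μ*x₀)) *
      (x ^ (k+t) * Real.exp (-(ω*x))) with hGdef
  have hωne : ω ≠ 0 := ne_of_gt hω
  have hfa : ∀ k : ℕ, (Nat.factorial k : ℝ) ≠ 0 :=
    fun k => Nat.cast_ne_zero.2 (Nat.factorial_ne_zero k)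
  have hc : ∀ k, 0 ≤ (ω ^ (2*k+1) * μ ^ k / (Nat.factorial k : ℝ)^2) * x₀^k *
      Real.exp (-(ω*μ*x₀)) := fun k => by positivity
  have hGint : ∀ k, Integrable (G k) (volume.restrict (Ioi (0:ℝ))) := fun k =>
    ((integrableOn_pow_mul_exp (k+t) hω).const_mul _)
  have hGval : ∀ k, ∫ x in Ioi (0:ℝ), G k x =
      (ω ^ (2*k+1) * μ ^ k / (Nat.factorial k : ℝ)^2) * x₀^k * Real.exp (-(ω*μ*x₀)) *
        ((Nat.factorial (k+t) : ℝ) / ω ^ (k+t+1)) := by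
    intro k
    rw [hGdef]
    simp only
    rw [MeasureTheory.integral_const_mul, integral_pow_mul_exp (k+t) hω]
  have hGnorm : ∀ k, ∫ x in Ioi (0:ℝ), ‖G k x‖ = ∫ x in Ioi (0:ℝ), G k x := by
    intro k
    refine setIntegral_congr_fun measurableSet_Ioi fun x hx => ?_
    rw [Real.norm_eq_abs, abs_of_nonneg]
    exact mul_nonneg (hc k) (mul_nonneg (pow_nonneg (le_of_lt hx) _) (Real.exp_nonneg _))
  -- summability of the integrals of norms
  have hsumnorm : Summable fun k => ∫ x in Ioi (0:ℝ), ‖G k x‖ := by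
    simp only [hGnorm, hGval]
    set e := Real.exp (-(ω*μ*x₀)) with he
    have hepos : 0 < e := Real.exp_pos _
    refine Summable.of_nonneg_of_le (fun k => ?_) (fun k => ?_)
      (((Real.summable_pow_div_factorial (2*(ω*μ*x₀))).mul_left
        (e / ω^t * (Nat.factorial t : ℝ) * 2^t)))
    · positivity
    · have hkey : ((Nat.factorial (k+t) : ℝ)) ≤ 2^(k+t) * (Nat.factorial t) * (Nat.factorial k) := by
        exact_mod_cast factorial_add_le k t
      have lhs_eq : (ω ^ (2*k+1) * μ ^ k / (Nat.factorial k : ℝ)^2) * x₀^k * e *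
          ((Nat.factorial (k+t) : ℝ) / ω ^ (k+t+1)) =
          (e / ω^t) * ((ω*μ*x₀)^k * ((Nat.factorial (k+t) : ℝ) / (Nat.factorial k : ℝ)^2)) := by
        field_simp
        ring
      rw [lhs_eq]
      have h1 : ((ω*μ*x₀)^k * ((Nat.factorial (k+t) : ℝ) / (Nat.factorial k : ℝ)^2)) ≤
          (ω*μ*x₀)^k * ((2^(k+t) * (Nat.factorial t : ℝ) * (Nat.factorial k)) /
            (Nat.factorial k : ℝ)^2) := by
        gcongr
      have h2 : (ω*μ*x₀)^k * ((2^(k+t) * (Nat.factorial t : ℝ) * (Nat.factorial k)) /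
            (Nat.factorial k : ℝ)^2) =
          (Nat.factorial t : ℝ) * 2^t * ((2*(ω*μ*x₀))^k / (Nat.factorial k : ℝ)) := by
        have : ((Nat.factorial k : ℝ))^2 = (Nat.factorial k : ℝ) * (Nat.factorial k : ℝ) := sq _
        field_simp
        ring
      calc (e / ω^t) * ((ω*μ*x₀)^k * ((Nat.factorial (k+t) : ℝ) / (Nat.factorial k : ℝ)^2))
          ≤ (e / ω^t) * ((ω*μ*x₀)^k * ((2^(k+t) * (Nat.factorial t : ℝ) * (Nat.factorial k)) /
              (Nat.factorial k : ℝ)^2)) := by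
            apply mul_le_mul_of_nonneg_left h1 (by positivity)
        _ = e / ω^t * (Nat.factorial t : ℝ) * 2^t * ((2*(ω*μ*x₀))^k / (Nat.factorial k : ℝ)) := by
            rw [h2]; ring
  -- pointwise identity
  have hpt : ∀ x ∈ Ioi (0:ℝ),
      x ^ t * (ω * Real.exp (-(ω * (x + μ * x₀))) * besselI0 (2 * ω * Real.sqrt (μ * x₀ * x))) =
        ∑' k, G k x := by
    intro x hx
    have hx0 : (0:ℝ) < x := hx
    have ha : 0 ≤ μ * x₀ * x := mul_nonneg (mul_nonneg hμ0 hx₀) hx0.le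
    have hs := (besselI0_hasSum (2 * ω * Real.sqrt (μ * x₀ * x))).mul_left
      (x ^ t * (ω * Real.exp (-(ω * (x + μ * x₀)))))
    rw [show x ^ t * (ω * Real.exp (-(ω * (x + μ * x₀))) *
        besselI0 (2 * ω * Real.sqrt (μ * x₀ * x))) =
        x ^ t * (ω * Real.exp (-(ω * (x + μ * x₀)))) *
        besselI0 (2 * ω * Real.sqrt (μ * x₀ * x)) by ring, ← hs.tsum_eq]
    refine tsum_congr fun k => ?_
    have hsq : (Real.sqrt (μ * x₀ * x)) ^ (2*k) = (μ * x₀ * x) ^ k := by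
      rw [pow_mul, Real.sq_sqrt ha]
    have hfour : (2:ℝ) ^ (2*k) = 4 ^ k := by rw [pow_mul]; norm_num
    have hexp : Real.exp (-(ω * (x + μ * x₀))) =
        Real.exp (-(ω*μ*x₀)) * Real.exp (-(ω*x)) := by
      rw [← Real.exp_add]; congr 1; ring
    rw [hGdef]
    simp only
    rw [mul_pow, mul_pow, hsq, hfour, hexp]
    field_simp
    ring
  calc ∫ x in Ioi (0:ℝ),
        x ^ t * (ω * Real.exp (-(ω * (x + μ * x₀))) * besselI0 (2 * ω * Real.sqrt (μ * x₀ * x)))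
      = ∫ x in Ioi (0:ℝ), ∑' k, G k x := setIntegral_congr_fun measurableSet_Ioi hpt
    _ = ∑' k, ∫ x in Ioi (0:ℝ), G k x :=
        (hasSum_integral_of_summable_integral_norm hGint hsumnorm).tsum_eq.symm
    _ = _ := by
        refine tsum_congr fun k => ?_
        rw [hGval k]
        ring
end
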